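/- arXiv:1811.10530 — 8 statements merged into one kernel-verified Lean document; each statement's English description precedes it below -/
import Mathlib

section
/- Expected character of the interchange process with general rates: ∑_{π∈G_n} p^B_t(π)·χ(π) = trace(exp(−t·A)), where A = ∑_{1≤i<j≤n} b_{ij}·(id_V − ρ((i j))) is a linear endomorphism of V and exp is the exponential of endomorphisms of the finite-dimensional space V. (Equivalently, the expectation of χ under the law of the rate-B interchange process at time t equals ∑_i e^{−t·ρ_i} over the eigenvalues ρ_1,…,ρ_{dim V} of A counted with multiplicity.) -/
noncomputable section

open Classical in
/-- The generator (Laplacian) of the interchange process with rates `B`: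
`L^B(σ,σ) = ∑_{i<j} b_{ij}`, `L^B(σ,τ) = -b_{ij}` if `τσ⁻¹ = (i j)`, `0` otherwise. -/
def rateL (n : ℕ) (B : Matrix (Fin n) (Fin n) ℝ) :
    Matrix (Equiv.Perm (Fin n)) (Equiv.Perm (Fin n)) ℝ :=
  Matrix.of fun σ τ =>
    ∑ p ∈ Finset.univ.filter (fun p : Fin n × Fin n => p.1 < p.2),
      B p.1 p.2 * ((if σ = τ then 1 else 0) - (if τ * σ⁻¹ = Equiv.swap p.1 p.2 then 1 else 0))

/-!
In the standard basis of the group algebra `ℂ[G_n]`, the complexified generator `L^B` is the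
transpose of the matrix of left multiplication by `ℓ = ∑_{i<j} b_{ij} (1 - (i j))`. The linear
form `M ↦ ∑_π M π 1 · χ(π)` turns left multiplication by any `x ∈ ℂ[G_n]` into `trace (ρ x)`.
Both are algebra homomorphisms out of `ℂ[G_n]` followed by continuous linear forms, so the
identity passes from the powers of `-tℓ` to the exponential series.
-/

open NormedSpace
open scoped Matrix

theorem ContinuousLinearMap.apply_exp_algHom_eq {𝕂 A 𝔸 𝔹 E : Type*} [RCLike 𝕂] [Ring A]
    [Algebra 𝕂 A] [NormedRing 𝔸] [NormedAlgebra 𝕂 𝔸] [CompleteSpace 𝔸] [NormedRing 𝔹]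
    [NormedAlgebra 𝕂 𝔹] [CompleteSpace 𝔹] [AddCommMonoid E] [Module 𝕂 E] [TopologicalSpace E]
    [T2Space E] (Λ : 𝔸 →L[𝕂] E) (T : 𝔹 →L[𝕂] E) (Φ : A →ₐ[𝕂] 𝔸) (Ψ : A →ₐ[𝕂] 𝔹)
    (h : ∀ x, Λ (Φ x) = T (Ψ x)) (a : A) : Λ (exp (Φ a)) = T (exp (Ψ a)) := by
  rw [exp_eq_tsum 𝕂, exp_eq_tsum 𝕂, Λ.map_tsum (expSeries_summable' _),
    T.map_tsum (expSeries_summable' _)]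
  simp only [map_smul, ← map_pow, h]

open scoped Matrix.Norms.Operator in
theorem Matrix.map_exp {m 𝔸 𝔹 : Type*} [Fintype m] [DecidableEq m] [NormedRing 𝔸]
    [NormedAlgebra ℚ 𝔸] [CompleteSpace 𝔸] [NormedRing 𝔹] [NormedAlgebra ℚ 𝔹] (f : 𝔸 →+* 𝔹)
    (hf : Continuous f) (M : Matrix m m 𝔸) : (exp M).map f = exp (M.map f) := by
  -- the operator norm induces the product uniformity, but not at instance transparency
  have : @CompleteSpace (Matrix m m 𝔸) PseudoMetricSpace.toUniformSpace :=
    inferInstanceAs (CompleteSpace (m → m → 𝔸))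
  exact NormedSpace.map_exp (f.mapMatrix : Matrix m m 𝔸 →+* Matrix m m 𝔹)
    (continuous_id.matrix_map hf) M

section GroupAlgebra

variable {k G : Type*} [CommSemiring k] [Group G] [Fintype G] [DecidableEq G]

theorem MonoidAlgebra.leftMulMatrix_basis_apply (x : MonoidAlgebra k G) (g h : G) :
    Algebra.leftMulMatrix (MonoidAlgebra.basis G k) x g h = x.coeff (g * h⁻¹) := by
  rw [Algebra.leftMulMatrix_eq_repr_mul, MonoidAlgebra.basis_apply]
  exact (x.coeff_mul_single_apply 1 h g).trans (mul_one _)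

theorem Representation.sum_leftMulMatrix_mul_trace {V : Type*} [AddCommMonoid V] [Module k V]
    [Module.Free k V] [Module.Finite k V] (ρ : Representation k G V) (x : MonoidAlgebra k G) :
    ∑ g, Algebra.leftMulMatrix (MonoidAlgebra.basis G k) x g 1 * LinearMap.trace k V (ρ g) =
      LinearMap.trace k V (ρ.asAlgebraHom x) := by
  have hrepr (g : G) : (MonoidAlgebra.basis G k).repr x g = x.coeff g := rfl
  conv_rhs => rw [← (MonoidAlgebra.basis G k).sum_repr x]
  simp only [map_sum, map_smul, hrepr, MonoidAlgebra.basis_apply, smul_eq_mul, inv_one, mul_one,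
    Representation.asAlgebraHom_single_one, MonoidAlgebra.leftMulMatrix_basis_apply]

open scoped Matrix.Norms.Operator in
theorem Representation.sum_exp_leftMulMatrix_mul_trace {𝕜 ι V : Type*} [RCLike 𝕜] [Fintype ι]
    [DecidableEq ι] [AddCommGroup V] [Module 𝕜 V] [FiniteDimensional 𝕜 V]
    (ρ : Representation 𝕜 G V) (b : Module.Basis ι 𝕜 V) (x : MonoidAlgebra 𝕜 G) :
    ∑ g, exp (Algebra.leftMulMatrix (MonoidAlgebra.basis G 𝕜) x) g 1 *
        LinearMap.trace 𝕜 V (ρ g) =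
      Matrix.trace (exp (LinearMap.toMatrix b b (ρ.asAlgebraHom x))) := by
  let Λ : Matrix G G 𝕜 →ₗ[𝕜] 𝕜 :=
    { toFun M := ∑ g, M g 1 * LinearMap.trace 𝕜 V (ρ g)
      map_add' M N := by simp only [Matrix.add_apply, add_mul, Finset.sum_add_distrib]
      map_smul' c M := by
        simp only [Matrix.smul_apply, smul_eq_mul, mul_assoc, Finset.mul_sum, RingHom.id_apply] }
  exact ContinuousLinearMap.apply_exp_algHom_eq (LinearMap.toContinuousLinearMap Λ)
    (LinearMap.toContinuousLinearMap (Matrix.traceLinearMap ι 𝕜 𝕜))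
    (Algebra.leftMulMatrix (MonoidAlgebra.basis G 𝕜))
    ((LinearMap.toMatrixAlgEquiv b).toAlgHom.comp ρ.asAlgebraHom)
    (fun y => (ρ.sum_leftMulMatrix_mul_trace y).trans (LinearMap.trace_eq_matrix_trace 𝕜 b _)) x

end GroupAlgebra

def interchangeGenerator (n : ℕ) (B : Matrix (Fin n) (Fin n) ℝ) :
    MonoidAlgebra ℂ (Equiv.Perm (Fin n)) :=
  ∑ p ∈ Finset.univ.filter (fun p : Fin n × Fin n => p.1 < p.2),
    (B p.1 p.2 : ℂ) • (1 - MonoidAlgebra.of ℂ _ (Equiv.swap p.1 p.2))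

theorem rateL_map_algebraMap (n : ℕ) (B : Matrix (Fin n) (Fin n) ℝ) :
    (rateL n B).map (algebraMap ℝ ℂ) =
      (Algebra.leftMulMatrix (MonoidAlgebra.basis _ ℂ) (interchangeGenerator n B))ᵀ := by
  ext σ τ
  simp only [Matrix.map_apply, Matrix.transpose_apply, MonoidAlgebra.leftMulMatrix_basis_apply,
    rateL, interchangeGenerator, Matrix.of_apply]
  simp only [map_sum, Complex.coe_algebraMap, Complex.ofReal_mul, Complex.ofReal_sub,
    MonoidAlgebra.one_def, MonoidAlgebra.of_apply, Complex.coe_smul, MonoidAlgebra.coeff_sum,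
    MonoidAlgebra.coeff_smul, MonoidAlgebra.coeff_sub, MonoidAlgebra.coeff_single,
    Finsupp.coe_finsetSum, Finsupp.coe_smul, Finsupp.coe_sub, Finset.sum_apply, Pi.smul_apply,
    Pi.sub_apply, Finsupp.single_apply, Complex.real_smul]
  refine Finset.sum_congr rfl fun p _ => ?_
  have hone : (1 = τ * σ⁻¹) ↔ σ = τ := by rw [eq_comm, mul_inv_eq_one, eq_comm]
  simp only [hone, eq_comm (a := Equiv.swap p.1 p.2), apply_ite Complex.ofReal, Complex.ofReal_one,
    Complex.ofReal_zero]

theorem asAlgebraHom_interchangeGenerator (n : ℕ) (B : Matrix (Fin n) (Fin n) ℝ) {V : Type*}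
    [AddCommGroup V] [Module ℂ V] (ρ : Representation ℂ (Equiv.Perm (Fin n)) V) :
    ρ.asAlgebraHom (interchangeGenerator n B) =
      ∑ p ∈ Finset.univ.filter (fun p : Fin n × Fin n => p.1 < p.2),
        (B p.1 p.2 : ℂ) • (LinearMap.id - ρ (Equiv.swap p.1 p.2)) := by
  simp only [interchangeGenerator, map_sum, map_smul, map_sub, map_one,
    Representation.asAlgebraHom_of, Module.End.one_eq_id]

theorem exp_smul_rateL_map_algebraMap (n : ℕ) (B : Matrix (Fin n) (Fin n) ℝ) (c : ℝ) :
    (exp (c • rateL n B)).map (algebraMap ℝ ℂ) =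
      (exp (Algebra.leftMulMatrix (MonoidAlgebra.basis _ ℂ)
        ((c : ℂ) • interchangeGenerator n B)))ᵀ := by
  rw [Matrix.map_exp _ Complex.continuous_ofReal, Matrix.map_smul' _ _ _ (map_mul _),
    rateL_map_algebraMap, map_smul, ← Matrix.transpose_smul, Matrix.exp_transpose,
    Complex.coe_algebraMap]

theorem expected_character_interchange_general (n : ℕ)
    (B : Matrix (Fin n) (Fin n) ℝ)
    (V : Type) [AddCommGroup V] [Module ℂ V] [FiniteDimensional ℂ V]
    (ρ : Representation ℂ (Equiv.Perm (Fin n)) V)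
    (t : ℝ) :
    ∑ π : Equiv.Perm (Fin n),
        (NormedSpace.exp ((-t) • rateL n B) 1 π : ℂ) * LinearMap.trace ℂ V (ρ π) =
      Matrix.trace (NormedSpace.exp
        ((-(t : ℂ)) • LinearMap.toMatrix (Module.finBasis ℂ V) (Module.finBasis ℂ V)
          (∑ p ∈ Finset.univ.filter (fun p : Fin n × Fin n => p.1 < p.2),
            ((B p.1 p.2 : ℝ) : ℂ) • (LinearMap.id - ρ (Equiv.swap p.1 p.2))))) := by
  have hentry (π : Equiv.Perm (Fin n)) : (exp ((-t) • rateL n B) 1 π : ℂ) =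
      exp (Algebra.leftMulMatrix (MonoidAlgebra.basis _ ℂ)
        (((-t : ℝ) : ℂ) • interchangeGenerator n B)) π 1 :=
    congr_fun₂ (exp_smul_rateL_map_algebraMap n B (-t)) 1 π
  rw [Finset.sum_congr rfl fun π _ => congrArg (· * _) (hentry π),
    ρ.sum_exp_leftMulMatrix_mul_trace (Module.finBasis ℂ V), map_smul,
    asAlgebraHom_interchangeGenerator, map_smul, Complex.ofReal_neg]

/-- Expected character of the interchange process with general rates:
`∑_π p^B_t(π) χ(π) = trace(exp(-t A))` where `A = ∑_{i<j} b_{ij}(id - ρ((i j)))`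
(the exponential computed via the matrix of `A` in a basis of `V`). -/
theorem expected_character_interchange (n : ℕ) (hn : 1 ≤ n)
    (B : Matrix (Fin n) (Fin n) ℝ) (hBsymm : B.IsSymm)
    (hBpos : ∀ i j : Fin n, i ≠ j → 0 < B i j)
    (V : Type) [AddCommGroup V] [Module ℂ V] [FiniteDimensional ℂ V] [Nontrivial V]
    (ρ : Representation ℂ (Equiv.Perm (Fin n)) V)
    (hirr : IsSimpleModule (MonoidAlgebra ℂ (Equiv.Perm (Fin n))) ρ.asModule)
    (t : ℝ) (ht : 0 ≤ t) :
    ∑ π : Equiv.Perm (Fin n),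
        (NormedSpace.exp ((-t) • rateL n B) 1 π : ℂ) * LinearMap.trace ℂ V (ρ π) =
      Matrix.trace (NormedSpace.exp
        ((-(t : ℂ)) • LinearMap.toMatrix (Module.finBasis ℂ V) (Module.finBasis ℂ V)
          (∑ p ∈ Finset.univ.filter (fun p : Fin n × Fin n => p.1 < p.2),
            ((B p.1 p.2 : ℝ) : ℂ) • (LinearMap.id - ρ (Equiv.swap p.1 p.2))))) :=
  expected_character_interchange_general n B V ρ t
end
end

section
/- For all integers m ≥ 1 and 1 ≤ k ≤ m, the sum over all permutations π of an m-element set of α_k(π)·2^{α(π)} equals 2 · C(m,k) · (k−1)! · (m−k+1)!. -/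
/-- `αₖ(π)`: the number of cycles of length `k` of the permutation `π`
(fixed points count as cycles of length 1). -/
def cycCount {m : ℕ} (k : ℕ) (π : Equiv.Perm (Fin m)) : ℕ :=
  if k = 1 then (Finset.univ.filter fun x => π x = x).card
  else Multiset.count k π.cycleType

/-- `α(π)`: the total number of cycles of `π` (fixed points included). -/
def cycTotal {m : ℕ} (π : Equiv.Perm (Fin m)) : ℕ :=
  Multiset.card π.cycleType + (Finset.univ.filter fun x => π x = x).card

/-!
Write `F(n) = ∑_{σ ∈ Sₙ} 2^{α(σ)}`. Removing a `k`-cycle `c` (or, for `k = 1`, a fixed point)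
from the permutations that contain it is a bijection onto the permutations of the remaining
`m - k` points which lowers `α` by one, so each of the `(k-1)!·C(m,k)` possible `k`-cycles
contributes `2·F(m-k)`. This gives the formula once `F(n) = (n+1)!`, which follows by strong
induction: as `∑ₖ k·αₖ(π) = n` for every `π ∈ Sₙ`, weighting the formula by `k` and summing
gives `n·F(n) = 2·n!·∑_{k=1}^{n} (n+1-k) = n·(n+1)!`.
-/

open Finset

universe u

lemma Nat.sum_Icc_mul_two_mul_choose_mul_factorial (n : ℕ) :
    ∑ k ∈ Icc 1 n, k * (2 * n.choose k * (k - 1).factorial * (n - k + 1).factorial) =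
      n * (n + 1).factorial := by
  have hterm : ∀ k ∈ Icc 1 n,
      k * (2 * n.choose k * (k - 1).factorial * (n - k + 1).factorial) =
        2 * n.factorial * (n + 1 - k) := by
    intro k hk
    obtain ⟨hk1, hkn⟩ := mem_Icc.mp hk
    rw [Nat.factorial_succ, show n + 1 - k = n - k + 1 by omega,
      ← Nat.choose_mul_factorial_mul_factorial hkn, ← Nat.mul_factorial_pred (by omega : k ≠ 0)]
    ring
  have hgauss : (∑ k ∈ Icc 1 n, (n + 1 - k)) * 2 = (n + 1) * n := by
    have hreflect : ∑ k ∈ Icc 1 n, (n + 1 - k) = ∑ k ∈ range (n + 1), k := by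
      rw [← Ico_add_one_right_eq_Icc, sum_Ico_eq_sum_range, Nat.add_sub_cancel,
        sum_range_succ', add_zero, ← sum_range_reflect]
      refine sum_congr rfl fun k hk ↦ ?_
      have := mem_range.mp hk
      omega
    rw [hreflect, sum_range_id_mul_two, Nat.add_sub_cancel]
  rw [sum_congr rfl hterm, ← mul_sum, Nat.factorial_succ]
  calc 2 * n.factorial * ∑ k ∈ Icc 1 n, (n + 1 - k)
      = n.factorial * ((∑ k ∈ Icc 1 n, (n + 1 - k)) * 2) := by ring
    _ = n * ((n + 1) * n.factorial) := by rw [hgauss]; ring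

namespace Equiv.Perm

variable {α : Type u} [Fintype α] [DecidableEq α]

-- `cycTotal` and `cycCount` on an arbitrary finite type, so that one can recurse on subtypes.
def numCycles (σ : Perm α) : ℕ := Multiset.card σ.cycleType + #{a | σ a = a}

def cycleCount (k : ℕ) (σ : Perm α) : ℕ :=
  if k = 1 then #{a | σ a = a} else σ.cycleType.count k

lemma card_filter_apply_eq_self (σ : Perm α) :
    #{a | σ a = a} = Fintype.card α - #σ.support := by
  rw [← card_compl]
  congr 1
  ext a
  simp

lemma numCycles_eq (σ : Perm α) :
    numCycles σ = Multiset.card σ.cycleType + (Fintype.card α - #σ.support) := by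
  rw [numCycles, card_filter_apply_eq_self]

lemma numCycles_ofSubtype {p : α → Prop} [DecidablePred p] (τ : Perm (Subtype p)) :
    numCycles (ofSubtype τ) + Fintype.card (Subtype p) = numCycles τ + Fintype.card α := by
  have h₁ : #τ.support ≤ Fintype.card (Subtype p) := card_le_univ _
  have h₂ : Fintype.card (Subtype p) ≤ Fintype.card α := Fintype.card_subtype_le p
  rw [numCycles_eq, numCycles_eq, cycleType_ofSubtype, support_ofSubtype, card_map]
  omega

lemma Disjoint.numCycles_mul {σ τ : Perm α} (h : σ.Disjoint τ) :
    numCycles (σ * τ) + Fintype.card α = numCycles σ + numCycles τ := by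
  have hle : #σ.support + #τ.support ≤ Fintype.card α := by
    rw [← h.card_support_mul]; exact card_le_univ _
  rw [numCycles_eq, numCycles_eq, numCycles_eq, h.cycleType_mul, h.card_support_mul,
    Multiset.card_add]
  omega

lemma IsCycle.numCycles {c : Perm α} (hc : c.IsCycle) :
    c.numCycles = Fintype.card α - #c.support + 1 := by
  rw [numCycles_eq, hc.cycleType, Multiset.card_singleton, add_comm]

lemma numCycles_cycle_mul_ofSubtype {c : Perm α} (hc : c.IsCycle)
    (τ : Perm {a // a ∉ c.support}) : numCycles (c * ofSubtype τ) = numCycles τ + 1 := by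
  have hdisj : c.Disjoint (ofSubtype τ) := fun a ↦ by
    by_cases ha : a ∈ c.support
    · exact .inr (ofSubtype_apply_of_not_mem τ (not_not_intro ha))
    · exact .inl (notMem_support.mp ha)
  have hcard : Fintype.card {a // a ∉ c.support} = Fintype.card α - #c.support := by
    rw [Fintype.card_subtype_compl, Fintype.card_coe]
  have hle : #c.support ≤ Fintype.card α := card_le_univ _
  have := hdisj.numCycles_mul
  have := numCycles_ofSubtype τ
  rw [hc.numCycles] at *
  omega

lemma numCycles_ofSubtype_ne (a : α) (τ : Perm {b // b ≠ a}) :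
    numCycles (ofSubtype τ) = numCycles τ + 1 := by
  have hcard : Fintype.card {b // b ≠ a} + 1 = Fintype.card α := by
    rw [Fintype.card_subtype_compl, Fintype.card_subtype_eq]
    have : 0 < Fintype.card α := Fintype.card_pos_iff.mpr ⟨a⟩
    omega
  have := numCycles_ofSubtype τ
  omega

lemma sum_ofSubtype {M : Type*} [AddCommMonoid M] (p : α → Prop) [DecidablePred p]
    (g : Perm α → M) :
    ∑ τ : Perm (Subtype p), g (ofSubtype τ) = ∑ f with ∀ a, ¬p a → f a = a, g f := by
  rw [sum_subtype (p := fun f : Perm α ↦ ∀ a, ¬p a → f a = a) _ (fun f ↦ by simp)]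
  exact Fintype.sum_equiv (Perm.subtypeEquivSubtypePerm p) _ _ fun _ ↦ rfl

lemma sum_filter_mem_cycleFactorsFinset {M : Type*} [AddCommMonoid M] {c : Perm α}
    (hc : c.IsCycle) (g : Perm α → M) :
    ∑ π with c ∈ π.cycleFactorsFinset, g π =
      ∑ τ : Perm {a // a ∉ c.support}, g (c * ofSubtype τ) := by
  rw [sum_ofSubtype (fun a ↦ a ∉ c.support) (fun f ↦ g (c * f))]
  symm
  refine sum_equiv (Equiv.mulLeft c) (fun f ↦ ?_) (fun _ _ ↦ rfl)
  simp [mem_cycleFactorsFinset_iff, hc, eq_comm]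

lemma sum_filter_apply_eq_self {M : Type*} [AddCommMonoid M] (a : α) (g : Perm α → M) :
    ∑ π with π a = a, g π = ∑ τ : Perm {b // b ≠ a}, g (ofSubtype τ) := by
  rw [sum_ofSubtype]
  simp

lemma count_cycleType (σ : Perm α) (k : ℕ) :
    σ.cycleType.count k = #{c ∈ σ.cycleFactorsFinset | c.cycleType = {k}} := by
  rw [cycleType_def, Multiset.count_map, ← filter_val, card_val]
  congr 1
  refine filter_congr fun c hc ↦ ?_
  rw [(mem_cycleFactorsFinset_iff.mp hc).1.cycleType]
  simp [eq_comm]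

variable {R : Type*} [CommSemiring R]

lemma sum_count_cycleType_mul_pow_numCycles (x : R) (k : ℕ) :
    ∑ π : Perm α, (π.cycleType.count k : R) * x ^ numCycles π =
      ∑ c : Perm α with c.cycleType = {k},
        x * ∑ τ : Perm {a // a ∉ c.support}, x ^ numCycles τ := by
  calc ∑ π : Perm α, (π.cycleType.count k : R) * x ^ numCycles π
      = ∑ π : Perm α, ∑ c ∈ π.cycleFactorsFinset with c.cycleType = {k}, x ^ numCycles π := by
        simp [count_cycleType]
    _ = ∑ c : Perm α with c.cycleType = {k}, ∑ π with c ∈ π.cycleFactorsFinset, x ^ numCycles π :=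
        sum_comm' fun _ _ ↦ by simp
    _ = _ := sum_congr rfl fun c hc ↦ by
        have hcycle : c.IsCycle := card_cycleType_eq_one.mp (by simp [(mem_filter.mp hc).2])
        simp [sum_filter_mem_cycleFactorsFinset hcycle, numCycles_cycle_mul_ofSubtype hcycle,
          pow_succ, mul_sum, mul_comm]

lemma sum_card_filter_apply_eq_self_mul_pow_numCycles (x : R) :
    ∑ π : Perm α, (#{a | π a = a} : R) * x ^ numCycles π =
      ∑ a : α, x * ∑ τ : Perm {b // b ≠ a}, x ^ numCycles τ := by
  calc ∑ π : Perm α, (#{a | π a = a} : R) * x ^ numCycles π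
      = ∑ π : Perm α, ∑ a with π a = a, x ^ numCycles π := by simp
    _ = ∑ a, ∑ π with π a = a, x ^ numCycles π := sum_comm' fun _ _ ↦ by simp
    _ = _ := sum_congr rfl fun a _ ↦ by
        simp [sum_filter_apply_eq_self, numCycles_ofSubtype_ne, pow_succ, mul_sum, mul_comm]

lemma sum_Icc_mul_cycleCount (σ : Perm α) :
    ∑ k ∈ Icc 1 (Fintype.card α), k * σ.cycleCount k = Fintype.card α := by
  obtain h | h := (Fintype.card α).eq_zero_or_pos
  · simp [h]
  have hsub : σ.cycleType.toFinset ⊆ Icc 2 (Fintype.card α) := fun k hk ↦ by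
    rw [Multiset.mem_toFinset] at hk
    exact mem_Icc.mpr ⟨two_le_of_mem_cycleType hk,
      (le_card_support_of_mem_cycleType hk).trans (card_le_univ _)⟩
  have hcycles : ∑ k ∈ Icc 2 (Fintype.card α), k * σ.cycleCount k = #σ.support := by
    rw [← sum_cycleType, sum_multiset_count_of_subset _ _ hsub]
    refine sum_congr rfl fun k hk ↦ ?_
    rw [cycleCount, if_neg (by grind), smul_eq_mul, mul_comm]
  have hle : #σ.support ≤ Fintype.card α := card_le_univ _
  rw [← insert_Icc_add_one_left_eq_Icc h, sum_insert (by simp), one_add_one_eq_two, hcycles,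
    cycleCount, if_pos rfl, card_filter_apply_eq_self]
  omega

lemma sum_cycleCount_mul_two_pow_numCycles_of_forall_card_lt
    (hF : ∀ (β : Type u) [Fintype β] [DecidableEq β], Fintype.card β < Fintype.card α →
      ∑ τ : Perm β, 2 ^ numCycles τ = (Fintype.card β + 1).factorial)
    {k : ℕ} (hk : 1 ≤ k) (hkn : k ≤ Fintype.card α) :
    ∑ π : Perm α, π.cycleCount k * 2 ^ numCycles π =
      2 * (Fintype.card α).choose k * (k - 1).factorial * (Fintype.card α - k + 1).factorial := by
  obtain rfl | hk2 := hk.eq_or_lt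
  · have h := sum_card_filter_apply_eq_self_mul_pow_numCycles (α := α) (2 : ℕ)
    simp only [Nat.cast_id] at h
    have hsum (a : α) : ∑ τ : Perm {b // b ≠ a}, 2 ^ numCycles τ =
        (Fintype.card α - 1 + 1).factorial := by
      have hcard : Fintype.card {b // b ≠ a} = Fintype.card α - 1 := by
        rw [Fintype.card_subtype_compl, Fintype.card_subtype_eq]
      rw [hF _ (by omega), hcard]
    simp only [cycleCount, if_true, h, hsum, sum_const, card_univ, smul_eq_mul,
      Nat.choose_one_right, Nat.sub_self, Nat.factorial_zero]
    ring
  · have h := sum_count_cycleType_mul_pow_numCycles (α := α) (2 : ℕ) k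
    simp only [Nat.cast_id] at h
    have hsum (c : Perm α) (hc : c ∈ ({c | c.cycleType = {k}} : Finset (Perm α))) :
        ∑ τ : Perm {a // a ∉ c.support}, 2 ^ numCycles τ =
          (Fintype.card α - k + 1).factorial := by
      have hsupp : #c.support = k := by simp [← sum_cycleType, (mem_filter.mp hc).2]
      have hcard : Fintype.card {a // a ∉ c.support} = Fintype.card α - k := by
        rw [Fintype.card_subtype_compl, Fintype.card_coe, hsupp]
      rw [hF _ (by omega), hcard]
    simp only [cycleCount, if_neg hk2.ne', h]
    rw [sum_congr rfl fun c hc ↦ by rw [hsum c hc], sum_const, smul_eq_mul,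
      card_of_cycleType_singleton hk2 hkn]
    ring

theorem sum_two_pow_numCycles (α : Type u) [Fintype α] [DecidableEq α] :
    ∑ σ : Perm α, 2 ^ numCycles σ = (Fintype.card α + 1).factorial := by
  induction h : Fintype.card α using Nat.strong_induction_on generalizing α with
  | _ n ih =>
  obtain rfl | hn := n.eq_zero_or_pos
  · have : IsEmpty α := Fintype.card_eq_zero_iff.mp h
    simp [numCycles]
  have hF : ∀ (β : Type u) [Fintype β] [DecidableEq β], Fintype.card β < Fintype.card α →
      ∑ τ : Perm β, 2 ^ numCycles τ = (Fintype.card β + 1).factorial :=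
    fun β _ _ hβ ↦ ih _ (h ▸ hβ) β rfl
  apply Nat.eq_of_mul_eq_mul_left hn
  calc n * ∑ σ : Perm α, 2 ^ numCycles σ
      = ∑ σ : Perm α, (∑ k ∈ Icc 1 n, k * σ.cycleCount k) * 2 ^ numCycles σ := by
        simp [← h, sum_Icc_mul_cycleCount, mul_sum]
    _ = ∑ k ∈ Icc 1 n, k * ∑ σ : Perm α, σ.cycleCount k * 2 ^ numCycles σ := by
        simp only [sum_mul, mul_sum, mul_assoc]
        exact sum_comm
    _ = ∑ k ∈ Icc 1 n, k * (2 * n.choose k * (k - 1).factorial * (n - k + 1).factorial) :=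
        sum_congr rfl fun k hk ↦ by
          rw [sum_cycleCount_mul_two_pow_numCycles_of_forall_card_lt hF (mem_Icc.mp hk).1
            (h ▸ (mem_Icc.mp hk).2), h]
    _ = n * (n + 1).factorial := Nat.sum_Icc_mul_two_mul_choose_mul_factorial n

end Equiv.Perm

theorem sum_cycCount_two_pow_general (m k : ℕ) (hk1 : 1 ≤ k) (hkm : k ≤ m) :
    ∑ π : Equiv.Perm (Fin m), cycCount k π * 2 ^ cycTotal π =
      2 * m.choose k * (k - 1).factorial * (m - k + 1).factorial := by
  have h := Equiv.Perm.sum_cycleCount_mul_two_pow_numCycles_of_forall_card_lt (α := Fin m)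
    (fun β _ _ _ ↦ Equiv.Perm.sum_two_pow_numCycles β) hk1 (by simpa using hkm)
  rwa [Fintype.card_fin] at h

/-- For `1 ≤ k ≤ m`, `∑_{π ∈ Sym_m} αₖ(π) 2^{α(π)} = 2 ⬝ C(m,k) ⬝ (k-1)! ⬝ (m-k+1)!`. -/
theorem sum_cycCount_two_pow (m k : ℕ) (hm : 1 ≤ m) (hk1 : 1 ≤ k) (hkm : k ≤ m) :
    ∑ π : Equiv.Perm (Fin m), cycCount k π * 2 ^ cycTotal π =
      2 * m.choose k * (k - 1).factorial * (m - k + 1).factorial :=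
  sum_cycCount_two_pow_general m k hk1 hkm
end

section
/- For every n ≥ 0, in the ring of multivariate polynomials MvPolynomial σ ℤ over a finite type σ: ∑_{λ ⊢ n} (∏_{i=1}^{r(λ)} (λ_i+1)) · m_λ = ∑_{d=0}^n h_d · h_{n−d}, where the left sum is over all partitions λ = (λ_1 ≥ … ≥ λ_{r(λ)} > 0) of n. -/
/-!
Both sides equal `∑_{s ∈ Sym σ n} N(s) X^s`, where `N(s)` is the number of submultisets of `s`.
Expanding `h_d h_{n-d}` counts the ways of writing `s = t + u` with `|t| = d`, so summing over `d`
counts all `t ≤ s`. On the other side, a multiset `s` of shape `λ` has `∏ (λ_i + 1)` submultisets,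
one choice of multiplicity per distinct element.
-/

open MvPolynomial Finset

variable {σ : Type*} [Fintype σ] [DecidableEq σ] {R : Type*} [CommSemiring R]

omit [Fintype σ] in
theorem Nat.Partition.prod_map_ofSym_parts_add_one {n : ℕ} (s : Sym σ n) :
    ((Nat.Partition.ofSym s).parts.map (· + 1)).prod = #(Iic (s : Multiset σ)) := by
  simp [Nat.Partition.ofSym, Multiset.card_Iic, Finset.prod, Multiset.map_map]

theorem MvPolynomial.hsymm_mul_hsymm_sub {n d : ℕ} (hd : d ≤ n) :
    hsymm σ R d * hsymm σ R (n - d) =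
      ∑ s : Sym σ n, ∑ _t ∈ Iic (s : Multiset σ) with Multiset.card _t = d,
        ((s : Multiset σ).map X).prod := by
  rw [hsymm, hsymm, sum_mul_sum, ← sum_product', sum_sigma']
  refine sum_bij'
    (fun p _ => ⟨⟨p.1 + p.2, by simp [Nat.add_sub_cancel' hd]⟩, (p.1 : Multiset σ)⟩)
    (fun q hq => (⟨q.2, (mem_filter.1 (mem_sigma.1 hq).2).2⟩,
      ⟨q.1 - q.2, by
        obtain ⟨hle, hcard⟩ := mem_filter.1 (mem_sigma.1 hq).2
        rw [Multiset.card_sub (mem_Iic.1 hle), hcard, Sym.card_coe]⟩))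
    ?_ ?_ ?_ ?_ ?_
  · intro p _
    exact mem_sigma.2 ⟨mem_univ _, mem_filter.2 ⟨mem_Iic.2 (Multiset.le_add_right _ _), by simp⟩⟩
  · simp
  · intro p _
    ext <;> simp
  · intro q hq
    have hle := mem_Iic.1 (mem_filter.1 (mem_sigma.1 hq).2).1
    ext <;> simp [add_tsub_cancel_of_le hle]
  · intro p _
    simp [Multiset.prod_add]

theorem MvPolynomial.sum_range_hsymm_mul_hsymm_sub (n : ℕ) :
    ∑ d ∈ range (n + 1), hsymm σ R d * hsymm σ R (n - d) =
      ∑ s : Sym σ n, #(Iic (s : Multiset σ)) • ((s : Multiset σ).map X).prod := by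
  rw [sum_congr rfl fun d hd => hsymm_mul_hsymm_sub (Nat.lt_succ_iff.1 (mem_range.1 hd)),
    sum_comm]
  refine sum_congr rfl fun s _ => ?_
  rw [sum_fiberwise_of_maps_to, sum_const]
  intro t ht
  exact mem_range.2 <| Nat.lt_succ_of_le <|
    (Multiset.card_le_card (mem_Iic.1 ht)).trans_eq Sym.card_coe

theorem MvPolynomial.sum_nsmul_msymm_eq_sum_hsymm_mul (n : ℕ) :
    ∑ lam : n.Partition, (lam.parts.map (· + 1)).prod • msymm σ R lam =
      ∑ d ∈ range (n + 1), hsymm σ R d * hsymm σ R (n - d) := by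
  rw [sum_range_hsymm_mul_hsymm_sub,
    ← Fintype.sum_fiberwise fun s : Sym σ n => Nat.Partition.ofSym s]
  refine sum_congr rfl fun lam _ => ?_
  rw [msymm, smul_sum]
  refine sum_congr rfl ?_
  rintro ⟨s, rfl⟩ -
  rw [Nat.Partition.prod_map_ofSym_parts_add_one]
  rfl

/-- For every `n ≥ 0`, in `MvPolynomial σ ℤ` over a finite type `σ`:
`∑_{λ ⊢ n} (∏ᵢ (λᵢ+1)) m_λ = ∑_{d=0}^n h_d h_{n-d}`. -/
theorem sum_msymm_eq_sum_hsymm_mul (σ : Type) [Fintype σ] [DecidableEq σ] (n : ℕ) :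
    ∑ lam : n.Partition,
        (((lam.parts.map (· + 1)).prod : ℕ) : ℤ) • msymm σ ℤ lam =
      ∑ d ∈ Finset.range (n + 1), hsymm σ ℤ d * hsymm σ ℤ (n - d) := by
  simp_rw [natCast_zsmul]
  exact sum_nsmul_msymm_eq_sum_hsymm_mul n
end

section
/- For all integers 1 ≤ k ≤ n, in the ring of multivariate polynomials MvPolynomial σ ℤ over a finite type σ: ∑_{λ ⊢ n} ( ∑_{i : λ_i ≥ k} (λ_i+1−k) · ∏_{j≠i} (λ_j+1) ) · m_λ = p_k · ∑_{ν ⊢ n−k} (∏_{j=1}^{r(ν)} (ν_j+1)) · m_ν, where parts of a partition are listed with multiplicity as λ_1 ≥ … ≥ λ_{r(λ)} > 0 and the inner sum is over indices i of parts (counted with multiplicity). -/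
open MvPolynomial

section Aux

variable {σ : Type} [DecidableEq σ]

private lemma map_erase_self' (f : σ → ℕ) {x : σ} {s : Multiset σ} (h : x ∈ s) :
    (s.map f).erase (f x) = (s.erase x).map f := by
  conv_lhs => rw [← Multiset.cons_erase h]
  simp

private lemma prod_parts_eq' (m : Multiset σ) :
    ((m.dedup.map m.count).map (· + 1)).prod = ∏ y ∈ m.toFinset, (m.count y + 1) := by
  rw [Multiset.map_map, Finset.prod]
  simp [Multiset.toFinset_val]

private lemma prodClaim' (m : Multiset σ) (x : σ) (k : ℕ) (hk : 1 ≤ k) (h : k ≤ m.count x) :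
    ∏ y ∈ (m - Multiset.replicate k x).toFinset, ((m - Multiset.replicate k x).count y + 1)
      = (m.count x + 1 - k) * ∏ y ∈ m.toFinset.erase x, (m.count y + 1) := by
  set m' := m - Multiset.replicate k x with hm'
  have hcount : ∀ y, m'.count y = if y = x then m.count x - k else m.count y := by
    intro y
    rw [hm', Multiset.count_sub, Multiset.count_replicate]
    rcases eq_or_ne y x with rfl | hne
    · simp
    · rw [if_neg hne, if_neg (fun h => hne h.symm), Nat.sub_zero]
  rcases eq_or_lt_of_le h with heq | hlt
  · have hfin : m'.toFinset = m.toFinset.erase x := by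
      ext y
      simp only [Multiset.mem_toFinset, Finset.mem_erase, ← Multiset.count_pos, hcount]
      rcases eq_or_ne y x with rfl | hne
      · simp [← heq]
      · simp [hne, Multiset.count_pos]
    have : m.count x + 1 - k = 1 := by omega
    rw [hfin, this, one_mul]
    refine Finset.prod_congr rfl fun y hy => ?_
    rw [hcount y, if_neg (Finset.ne_of_mem_erase hy)]
  · have hfin : m'.toFinset = m.toFinset := by
      ext y
      simp only [Multiset.mem_toFinset, ← Multiset.count_pos, hcount]
      rcases eq_or_ne y x with rfl | hne
      · simp; omega
      · simp [hne]
    have hx : x ∈ m'.toFinset := by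
      rw [hfin, Multiset.mem_toFinset, ← Multiset.count_pos]; omega
    rw [hfin] at hx ⊢
    rw [← Finset.mul_prod_erase _ _ hx]
    have h1 : m'.count x + 1 = m.count x + 1 - k := by rw [hcount]; simp; omega
    rw [h1]
    congr 1
    refine Finset.prod_congr rfl fun y hy => ?_
    rw [hcount y, if_neg (Finset.ne_of_mem_erase hy)]

private lemma core' (m : Multiset σ) [Fintype σ] (k : ℕ) (hk : 1 ≤ k) :
    ((m.dedup.map m.count).map (fun p => if k ≤ p then
        (p + 1 - k) * (((m.dedup.map m.count).erase p).map (· + 1)).prod else 0)).sum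
      = ∑ x : {x : σ // k ≤ m.count x},
          (((m - Multiset.replicate k x.1).dedup.map
            (m - Multiset.replicate k x.1).count).map (· + 1)).prod := by
  have hrhs : ∀ x : {x : σ // k ≤ m.count x},
      (((m - Multiset.replicate k x.1).dedup.map
        (m - Multiset.replicate k x.1).count).map (· + 1)).prod
      = (m.count x.1 + 1 - k) * ∏ y ∈ m.toFinset.erase x.1, (m.count y + 1) := fun x => by
    rw [prod_parts_eq', prodClaim' m x.1 k hk x.2]
  rw [Finset.sum_congr rfl (fun x _ => hrhs x)]
  rw [← Finset.sum_subtype (Finset.univ.filter (fun x => k ≤ m.count x))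
    (by simp) (fun y => (m.count y + 1 - k) * ∏ z ∈ m.toFinset.erase y, (m.count z + 1))]
  rw [Finset.sum_filter]
  rw [Multiset.map_map]
  simp only [Function.comp_def]
  have hlhs : ((m.dedup.map fun y => if k ≤ m.count y then
      (m.count y + 1 - k) * (((m.dedup.map m.count).erase (m.count y)).map (· + 1)).prod
      else 0)).sum
      = ∑ y ∈ m.toFinset, (if k ≤ m.count y then
        (m.count y + 1 - k) * (((m.dedup.map m.count).erase (m.count y)).map (· + 1)).prod
        else 0) := by
    rw [Finset.sum]; simp [Multiset.toFinset_val]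
  rw [hlhs]
  rw [Finset.sum_subset (Finset.subset_univ m.toFinset) (by
    intro y _ hy
    rw [Multiset.mem_toFinset, ← Multiset.count_pos] at hy
    rw [if_neg (by omega)])]
  refine Finset.sum_congr rfl fun y _ => ?_
  rcases le_or_gt k (m.count y) with hky | hky
  · rw [if_pos hky, if_pos hky]
    congr 1
    have hy : y ∈ m.dedup := by
      rw [Multiset.mem_dedup, ← Multiset.count_pos]; omega
    rw [show m.count y = m.count y from rfl, map_erase_self' m.count hy,
      Multiset.map_map, Finset.prod]
    simp [Finset.erase_val, Multiset.toFinset_val]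
  · rw [if_neg (by omega), if_neg (by omega)]

variable [Fintype σ]

private lemma sum_msymm_eq' (n : ℕ) (c : n.Partition → ℤ) :
    ∑ μ : n.Partition, c μ • msymm σ ℤ μ =
      ∑ s : Sym σ n, c (Nat.Partition.ofSym s) • (s.1.map X).prod := by
  rw [← Fintype.sum_fiberwise (fun s : Sym σ n => Nat.Partition.ofSym s)
    (fun s => c (Nat.Partition.ofSym s) • (s.1.map X).prod)]
  refine Finset.sum_congr rfl fun μ _ => ?_
  rw [msymm, Finset.smul_sum]
  refine Finset.sum_congr rfl fun a _ => ?_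
  rw [a.2]

private lemma rhs_expand' (n k : ℕ) (d : (n-k).Partition → ℕ) :
    psum σ ℤ k * ∑ t : Sym σ (n-k), ((d (Nat.Partition.ofSym t) : ℤ)) • (t.1.map X).prod
    = ∑ a : σ × Sym σ (n-k), (d (Nat.Partition.ofSym a.2) : ℤ) •
        (((Multiset.replicate k a.1 + a.2.1).map X).prod) := by
  rw [psum, Finset.sum_mul_sum, ← Fintype.sum_prod_type']
  refine Finset.sum_congr rfl fun a _ => ?_
  rw [Multiset.map_add, Multiset.prod_add, Multiset.map_replicate, Multiset.prod_replicate,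
    Algebra.mul_smul_comm]

private def emb' (n k : ℕ) (hkn : k ≤ n) (a : σ × Sym σ (n-k)) : Sym σ n :=
  ⟨Multiset.replicate k a.1 + a.2.1, by
    rw [Multiset.card_add, Multiset.card_replicate, a.2.2]; omega⟩

private def fiberEquiv' (n k : ℕ) (hkn : k ≤ n) (s : Sym σ n) :
    {a : σ × Sym σ (n-k) // emb' n k hkn a = s} ≃ {x : σ // k ≤ s.1.count x} where
  toFun a := ⟨a.1.1, by
    obtain ⟨⟨x, t⟩, rfl⟩ := a
    show k ≤ Multiset.count x (Multiset.replicate k x + t.1)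
    rw [Multiset.count_add, Multiset.count_replicate, if_pos rfl]
    omega⟩
  invFun x := ⟨(x.1, ⟨s.1 - Multiset.replicate k x.1, by
      rw [Multiset.card_sub (Multiset.le_count_iff_replicate_le.mp x.2),
        Multiset.card_replicate, s.2]⟩), by
    apply Subtype.ext
    show Multiset.replicate k x.1 + (s.1 - Multiset.replicate k x.1) = s.1
    exact add_tsub_cancel_of_le (Multiset.le_count_iff_replicate_le.mp x.2)⟩
  left_inv a := by
    obtain ⟨⟨x, t⟩, ht⟩ := a
    apply Subtype.ext
    dsimp only
    refine Prod.ext rfl (Subtype.ext ?_)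
    show s.1 - Multiset.replicate k x = t.1
    rw [← ht]
    exact add_tsub_cancel_left _ _
  right_inv x := by apply Subtype.ext; rfl

end Aux

/-- For `1 ≤ k ≤ n`, in `MvPolynomial σ ℤ` over a finite type `σ`:
`∑_{λ ⊢ n} (∑_{i : λᵢ ≥ k} (λᵢ+1-k) ∏_{j≠i} (λⱼ+1)) m_λ
  = p_k · ∑_{ν ⊢ n-k} (∏ⱼ (νⱼ+1)) m_ν`,
where the inner sum runs over the parts of `λ` counted with multiplicity, and
`∏_{j≠i}` is the product over the remaining parts (one copy of `λᵢ` removed). -/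
theorem sum_msymm_eq_psum_mul (σ : Type) [Fintype σ] [DecidableEq σ] (n k : ℕ)
    (hk1 : 1 ≤ k) (hkn : k ≤ n) :
    ∑ lam : n.Partition,
        (((lam.parts.map (fun p =>
            if k ≤ p then (p + 1 - k) * ((lam.parts.erase p).map (· + 1)).prod
            else 0)).sum : ℕ) : ℤ) • msymm σ ℤ lam =
      psum σ ℤ k *
        ∑ nu : (n - k).Partition,
          (((nu.parts.map (· + 1)).prod : ℕ) : ℤ) • msymm σ ℤ nu := by
  rw [sum_msymm_eq' n (fun lam => (((lam.parts.map (fun p =>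
      if k ≤ p then (p + 1 - k) * ((lam.parts.erase p).map (· + 1)).prod
      else 0)).sum : ℕ) : ℤ))]
  rw [sum_msymm_eq' (n - k) (fun nu => (((nu.parts.map (· + 1)).prod : ℕ) : ℤ))]
  rw [rhs_expand' n k (fun nu => (nu.parts.map (· + 1)).prod)]
  refine Eq.trans ?_ (Fintype.sum_fiberwise (emb' n k hkn)
    (fun a : σ × Sym σ (n-k) => ((((Nat.Partition.ofSym a.2).parts.map (· + 1)).prod : ℕ) : ℤ) •
      (((Multiset.replicate k a.1 + a.2.1).map (X : σ → MvPolynomial σ ℤ)).prod)))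
  refine Finset.sum_congr rfl fun s _ => ?_
  have hmon : ∀ a : {a : σ × Sym σ (n-k) // emb' n k hkn a = s},
      ((Multiset.replicate k a.1.1 + a.1.2.1).map (X : σ → MvPolynomial σ ℤ)).prod
        = (s.1.map X).prod := by
    intro a
    congr 1
    rw [show Multiset.replicate k a.1.1 + a.1.2.1 = (emb' n k hkn a.1).1 from rfl, a.2]
  simp_rw [fun a => hmon a]
  rw [← Finset.sum_smul]
  congr 1
  rw [← Nat.cast_sum]
  congr 1
  rw [Fintype.sum_equiv (fiberEquiv' n k hkn s)
    (fun a => ((Nat.Partition.ofSym a.1.2).parts.map (· + 1)).prod)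
    (fun x : {x : σ // k ≤ s.1.count x} =>
      (((s.1 - Multiset.replicate k x.1).dedup.map
        (s.1 - Multiset.replicate k x.1).count).map (· + 1)).prod) ?_]
  · exact core' s.1 k hk1
  · intro a
    obtain ⟨⟨x, t⟩, rfl⟩ := a
    show ((t.1.dedup.map t.1.count).map (· + 1)).prod =
      (((Multiset.replicate k x + t.1 - Multiset.replicate k x).dedup.map
        (Multiset.replicate k x + t.1 - Multiset.replicate k x).count).map (· + 1)).prod
    rw [add_tsub_cancel_left]
end

section
/- For every pre-diagram λ = (λ_1, …, λ_r): (1) at most one move R_j is applicable to λ; and (2) every sequence λ = λ(0), λ(1), λ(2), … in which each λ(s+1) is obtained from λ(s) by an applicable move is finite (the wrapping process terminates). -/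
/-- A pre-diagram: a finite sequence of nonnegative integers whose last entry is nonzero
and which has at most one ascent (index `i` with `λ_{i+1} > λ_i`). -/
def IsPreDiagram (l : List ℕ) : Prop :=
  (∀ h : l ≠ [], l.getLast h ≠ 0) ∧
    (List.range (l.length - 1)).countP
      (fun i => decide (l.getD i 0 < l.getD (i + 1) 0)) ≤ 1

/-- The move `R_j` (0-indexed: acting on positions `j, j+1`) is applicable. -/
def MoveApplicable (l : List ℕ) (j : ℕ) : Prop :=
  j + 1 < l.length ∧ l.getD j 0 + 2 ≤ l.getD (j + 1) 0

/-- The result of applying the move `R_j`: the pair `(λ_j, λ_{j+1})` is replaced by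
`(λ_{j+1} - 1, λ_j + 1)`. -/
def applyMove (l : List ℕ) (j : ℕ) : List ℕ :=
  (l.set j (l.getD (j + 1) 0 - 1)).set (j + 1) (l.getD j 0 + 1)

/-- `l'` is obtained from `l` by one applicable move. -/
def MoveRel (l l' : List ℕ) : Prop := ∃ j, MoveApplicable l j ∧ l' = applyMove l j

/-!
An applicable move `R_j` needs an ascent at `j`, and a pre-diagram has at most one ascent.
Each move `R_j` lowers the moment `∑ i λ_i` by `λ_{j+1} - λ_j - 1 ≥ 1`, so no infinite sequence
of moves exists.
-/

theorem List.eq_of_countP_le_one {α : Type*} {p : α → Bool} {l : List α}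
    (h : l.countP p ≤ 1) {a b : α} (ha : a ∈ l) (hb : b ∈ l) (hpa : p a) (hpb : p b) :
    a = b := by
  have ha' : a ∈ l.filter p := mem_filter.2 ⟨ha, hpa⟩
  have hb' : b ∈ l.filter p := mem_filter.2 ⟨hb, hpb⟩
  rw [countP_eq_length_filter] at h
  match hfilter : l.filter p, h with
  | [x], _ => simp_all
  | [], _ => simp_all
  | _ :: _ :: _, h => simp at h

theorem IsPreDiagram.eq_of_moveApplicable {l : List ℕ} (hl : IsPreDiagram l) {j₁ j₂ : ℕ}
    (h₁ : MoveApplicable l j₁) (h₂ : MoveApplicable l j₂) : j₁ = j₂ := by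
  have ascent : ∀ {j}, MoveApplicable l j →
      j ∈ List.range (l.length - 1) ∧ decide (l.getD j 0 < l.getD (j + 1) 0) := by
    rintro j ⟨hj, hgap⟩
    exact ⟨List.mem_range.2 (by omega), decide_eq_true (by omega)⟩
  exact List.eq_of_countP_le_one hl.2 (ascent h₁).1 (ascent h₂).1 (ascent h₁).2 (ascent h₂).2

theorem Finset.sum_add_pair_eq_sum_add_pair {ι M : Type*} [AddCommMonoid M] [DecidableEq ι]
    {s : Finset ι} {f g : ι → M} {j k : ι} (hjk : j ≠ k) (hj : j ∈ s) (hk : k ∈ s)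
    (hfg : ∀ i ∈ s, i ≠ j → i ≠ k → f i = g i) :
    ∑ i ∈ s, f i + (g j + g k) = ∑ i ∈ s, g i + (f j + f k) := by
  have hsub : {j, k} ⊆ s := insert_subset hj (singleton_subset_iff.2 hk)
  have hrest : ∑ i ∈ s \ {j, k}, f i = ∑ i ∈ s \ {j, k}, g i :=
    sum_congr rfl fun i hi => by
      simp only [mem_sdiff, mem_insert, mem_singleton, not_or] at hi
      exact hfg i hi.1 hi.2.1 hi.2.2
  rw [← sum_sdiff hsub (f := f), ← sum_sdiff hsub (f := g), sum_pair hjk, sum_pair hjk, hrest]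
  abel

theorem length_applyMove (l : List ℕ) (j : ℕ) : (applyMove l j).length = l.length := by
  simp [applyMove]

theorem getD_applyMove {l : List ℕ} {j : ℕ} (hj : j + 1 < l.length) (i : ℕ) :
    (applyMove l j).getD i 0 =
      if i = j + 1 then l.getD j 0 + 1 else if i = j then l.getD (j + 1) 0 - 1
      else l.getD i 0 := by
  simp only [applyMove, List.getD_eq_getElem?_getD, List.getElem?_set, List.length_set]
  split_ifs <;> first | omega | rfl

def moment (l : List ℕ) : ℕ := ∑ i ∈ Finset.range l.length, i * l.getD i 0

theorem MoveRel.moment_lt {l l' : List ℕ} (h : MoveRel l l') : moment l' < moment l := by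
  obtain ⟨j, ⟨hj, hgap⟩, rfl⟩ := h
  have hsplit := Finset.sum_add_pair_eq_sum_add_pair (s := Finset.range l.length)
    (f := fun i => i * (applyMove l j).getD i 0) (g := fun i => i * l.getD i 0)
    (j := j) (k := j + 1) (by omega) (Finset.mem_range.2 (by omega)) (Finset.mem_range.2 hj)
    (fun i _ hij hij1 => by simp only [getD_applyMove hj, if_neg hij, if_neg hij1])
  have hmoved_j : (applyMove l j).getD j 0 = l.getD (j + 1) 0 - 1 := by
    rw [getD_applyMove hj, if_neg (by omega), if_pos rfl]
  have hmoved_succ : (applyMove l j).getD (j + 1) 0 = l.getD j 0 + 1 := by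
    rw [getD_applyMove hj, if_pos rfl]
  rw [hmoved_j, hmoved_succ] at hsplit
  rw [moment, moment, length_applyMove]
  obtain ⟨c, hc⟩ : ∃ c, l.getD (j + 1) 0 = l.getD j 0 + 2 + c := ⟨_, (Nat.add_sub_of_le hgap).symm⟩
  rw [hc, show l.getD j 0 + 2 + c - 1 = l.getD j 0 + 1 + c by omega] at hsplit
  nlinarith

theorem wellFounded_flip_moveRel : WellFounded (flip MoveRel) :=
  Subrelation.wf (fun h => MoveRel.moment_lt h) (measure moment).wf

/-- For a pre-diagram: (1) at most one move is applicable, and (2) the wrapping process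
terminates, i.e. there is no infinite sequence of moves starting from it. -/
theorem preDiagram_unique_move_and_terminates (l : List ℕ) (hl : IsPreDiagram l) :
    (∀ j₁ j₂ : ℕ, MoveApplicable l j₁ → MoveApplicable l j₂ → j₁ = j₂) ∧
    ¬ ∃ f : ℕ → List ℕ, f 0 = l ∧ ∀ s : ℕ, MoveRel (f s) (f (s + 1)) := by
  refine ⟨fun _ _ => hl.eq_of_moveApplicable, ?_⟩
  rintro ⟨f, -, hf⟩
  exact (wellFounded_iff_isEmpty_descending_chain.1 wellFounded_flip_moveRel).false ⟨f, hf⟩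
end

section
/- Let μ = (μ_1 ≥ … ≥ μ_r > 0) be a Young diagram, k ≥ 1, and 1 ≤ i ≤ r+k, with the convention μ_l = 0 for l > r. Let m be the least integer j ≥ 0 such that either j = i−1 or μ_{i−j−1} + j ≥ μ_i + k − 1, and let δ be the sequence (μ_1, …, μ_{i−m−1}, μ_i+k−m, μ_{i−m}+1, …, μ_{i−1}+1, μ_{i+1}, …, μ_r). Then: (1) there exists a Young diagram λ containing μ such that λ∖μ is a border strip of size k whose lowest row is row i if and only if δ is nonincreasing; (2) in that case such λ is unique, it equals δ, and ht(λ∖μ) = m+1. -/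
/-- The length of row `i` (1-indexed) of a Young diagram given as a list;
rows beyond the list have length `0`. -/
def rowLen (lam : List ℕ) (i : ℕ) : ℕ := lam.getD (i - 1) 0

/-- A Young diagram: a nonincreasing finite sequence of positive integers. -/
def IsYoung (lam : List ℕ) : Prop := lam.Pairwise (· ≥ ·) ∧ ∀ x ∈ lam, 0 < x

/-- `(l, c)` (row `l`, column `c`, both 1-indexed) is a cell of `lam`. -/
def IsCell (lam : List ℕ) (p : ℕ × ℕ) : Prop :=
  1 ≤ p.1 ∧ 1 ≤ p.2 ∧ p.2 ≤ rowLen lam p.1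

/-- `mu ⊆ lam`: `mu` has at most as many rows and `mu_l ≤ lam_l` for every `l`. -/
def YoungContains (mu lam : List ℕ) : Prop :=
  mu.length ≤ lam.length ∧ ∀ l : ℕ, rowLen mu l ≤ rowLen lam l

/-- The skew diagram `lam \ mu`: cells of `lam` that are not cells of `mu`. -/
def skewCells (lam mu : List ℕ) : Set (ℕ × ℕ) := {p | IsCell lam p ∧ ¬ IsCell mu p}

/-- Two cells share an edge (differ by exactly 1 in exactly one coordinate). -/
def CellAdj (u v : ℕ × ℕ) : Prop :=
  (u.1 = v.1 ∧ (u.2 + 1 = v.2 ∨ v.2 + 1 = u.2)) ∨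
  (u.2 = v.2 ∧ (u.1 + 1 = v.1 ∨ v.1 + 1 = u.1))

/-- A border strip: a nonempty, edge-connected set of cells with no 2×2 square. -/
def IsBorderStrip (S : Set (ℕ × ℕ)) : Prop :=
  S.Nonempty ∧
  (∀ x ∈ S, ∀ y ∈ S, Relation.ReflTransGen (fun a b => b ∈ S ∧ CellAdj a b) x y) ∧
  ¬ ∃ l c : ℕ, (l, c) ∈ S ∧ (l, c + 1) ∈ S ∧ (l + 1, c) ∈ S ∧ (l + 1, c + 1) ∈ S

/-- The height of a skew diagram: the number of rows containing one of its cells. -/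
noncomputable def stripHeight (S : Set (ℕ × ℕ)) : ℕ := {l : ℕ | ∃ c, (l, c) ∈ S}.ncard

/-- Row `i` is the lowest row of `S`. -/
def LowestRow (S : Set (ℕ × ℕ)) (i : ℕ) : Prop :=
  (∃ c, (i, c) ∈ S) ∧ ∀ l : ℕ, (∃ c, (l, c) ∈ S) → l ≤ i

/-- The candidate diagram `δ = (μ₁, …, μ_{i−m−1}, μ_i+k−m, μ_{i−m}+1, …, μ_{i−1}+1,
μ_{i+1}, …, μ_r)`, as a list of row lengths. -/
def deltaList (mu : List ℕ) (k i m : ℕ) : List ℕ :=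
  (List.range (max i mu.length)).map fun l0 =>
    let t := l0 + 1
    if t < i - m then rowLen mu t
    else if t = i - m then rowLen mu i + k - m
    else if t ≤ i then rowLen mu (t - 1) + 1
    else rowLen mu t

/-!
If `λ ∖ μ` is a border strip occupying rows `h, …, i`, connectivity forces every row between
`h` and `i` to be occupied, and connectivity together with the absence of `2 × 2` squares forces
`λ_{l+1} = μ_l + 1` for `h ≤ l < i`: consecutive rows of the strip overlap in exactly one column.
So `λ` is determined by `h` and `λ_h`, and counting cells gives `k + μ_i = λ_h + (i - h)`.
As `λ_{h-1} = μ_{h-1} ≥ λ_h`, the index `j = i - h` satisfies the condition defining `m`, while for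
`j < i - h` the bound `μ_{i-j-1} + 1 = λ_{i-j} ≤ λ_h` rules it out; hence `h = i - m` and `λ = δ`.
Conversely `δ` always has this shape with `h = i - m`, so it is a solution once it is a partition.
-/

open Finset

lemma antitone_rowLen {L : List ℕ} (hL : L.Pairwise (· ≥ ·)) : Antitone (rowLen L) := by
  intro a b hab
  unfold rowLen
  rcases lt_or_ge (b - 1) L.length with hb | hb
  · rw [List.getD_eq_getElem _ _ hb, List.getD_eq_getElem _ _ (by omega)]
    rcases (Nat.sub_le_sub_right hab 1).eq_or_lt with heq | hlt
    · simp only [heq, le_refl]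
    · exact List.pairwise_iff_getElem.1 hL _ _ _ _ hlt
  · rw [List.getD_eq_default _ _ hb]
    exact Nat.zero_le _

lemma rowLen_eq_zero {L : List ℕ} {l : ℕ} (h : L.length < l) : rowLen L l = 0 :=
  List.getD_eq_default _ _ (by omega)

lemma rowLen_pos {L : List ℕ} (hL : IsYoung L) {l : ℕ} (h1 : 1 ≤ l) (h2 : l ≤ L.length) :
    0 < rowLen L l := by
  rw [rowLen, List.getD_eq_getElem _ _ (by omega)]
  exact hL.2 _ (List.getElem_mem _)

lemma le_length_of_rowLen_pos {L : List ℕ} {l : ℕ} (h : 0 < rowLen L l) : l ≤ L.length := by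
  by_contra! hlt
  rw [rowLen_eq_zero hlt] at h
  exact lt_irrefl 0 h

lemma eq_of_rowLen_eq {L L' : List ℕ} (hlen : L.length = L'.length)
    (h : ∀ l, 1 ≤ l → rowLen L l = rowLen L' l) : L = L' := by
  refine List.ext_getElem hlen fun n h1 h2 => ?_
  have := h (n + 1) (by omega)
  rwa [rowLen, rowLen, Nat.add_sub_cancel, List.getD_eq_getElem _ _ h1,
    List.getD_eq_getElem _ _ h2] at this

lemma isYoung_of_rowLen_pos {L : List ℕ} (hL : L.Pairwise (· ≥ ·))
    (hpos : ∀ l, 1 ≤ l → l ≤ L.length → 0 < rowLen L l) : IsYoung L := by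
  refine ⟨hL, fun x hx => ?_⟩
  obtain ⟨n, hn, rfl⟩ := List.mem_iff_getElem.1 hx
  have := hpos (n + 1) (by omega) (by omega)
  rwa [rowLen, Nat.add_sub_cancel, List.getD_eq_getElem _ _ hn] at this

@[simp]
lemma mem_skewCells {lam mu : List ℕ} {l c : ℕ} :
    (l, c) ∈ skewCells lam mu ↔ 1 ≤ l ∧ rowLen mu l < c ∧ c ≤ rowLen lam l := by
  simp only [skewCells, IsCell, Set.mem_ofPred_eq]
  omega

lemma rowLen_eq_of_not_exists_mem_skewCells {lam mu : List ℕ}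
    (hle : ∀ l, rowLen mu l ≤ rowLen lam l) {l : ℕ} (hl : 1 ≤ l)
    (hrow : ¬ ∃ c, (l, c) ∈ skewCells lam mu) : rowLen lam l = rowLen mu l := by
  by_contra hne
  exact hrow ⟨rowLen mu l + 1, mem_skewCells.2 ⟨hl, by omega, by have := hle l; omega⟩⟩

abbrev StripPath (S : Set (ℕ × ℕ)) : ℕ × ℕ → ℕ × ℕ → Prop :=
  Relation.ReflTransGen fun a b => b ∈ S ∧ CellAdj a b

namespace StripPath

variable {S : Set (ℕ × ℕ)} {x y : ℕ × ℕ}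

lemma mem (hp : StripPath S x y) (hx : x ∈ S) : y ∈ S := by
  induction hp with
  | refl => exact hx
  | tail _ hstep _ => exact hstep.1

lemma symm (hp : StripPath S x y) (hx : x ∈ S) : StripPath S y x := by
  induction hp with
  | refl => exact .refl
  | tail hp' hstep ih =>
    have hadj := hstep.2
    exact .head ⟨StripPath.mem hp' hx, by unfold CellAdj at hadj ⊢; omega⟩ ih

lemma exists_mem_row (hp : StripPath S x y) (hx : x ∈ S) {l : ℕ} (hxl : x.1 ≤ l)
    (hly : l ≤ y.1) : ∃ c, (l, c) ∈ S := by
  induction hp with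
  | refl => exact ⟨x.2, by rwa [← le_antisymm hxl hly]⟩
  | @tail b y _ hstep ih =>
    rcases le_or_gt l b.1 with hlb | hbl
    · exact ih hlb
    · have hyl : y.1 = l := by rcases hstep.2 with ⟨_, _⟩ | ⟨_, _⟩ <;> omega
      exact ⟨y.2, hyl ▸ hstep.1⟩

/-- The path must step up from row `l + 1` to row `l` in a column occupied in both rows. -/
lemma lt_rowLen_succ {lam mu : List ℕ} (hp : StripPath (skewCells lam mu) x y)
    (hx : x ∈ skewCells lam mu) {l : ℕ} (hlx : l < x.1) (hyl : y.1 ≤ l) :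
    rowLen mu l < rowLen lam (l + 1) := by
  induction hp with
  | refl => omega
  | @tail b y hp' hstep ih =>
    rcases le_or_gt b.1 l with hbl | hlb
    · exact ih hbl
    · obtain ⟨b1, b2⟩ := b
      obtain ⟨y1, y2⟩ := y
      have hb := StripPath.mem hp' hx
      obtain ⟨hy, ⟨rfl, _⟩ | ⟨rfl, hrow⟩⟩ := hstep
      · dsimp only at hlb hyl
        omega
      · obtain rfl : y1 = l := by dsimp only at hlb hyl hrow; omega
        obtain rfl : b1 = y1 + 1 := by dsimp only at hlb hrow; omega
        rw [mem_skewCells] at hb hy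
        omega

end StripPath

lemma stripPath_row_left {S : Set (ℕ × ℕ)} {l c c' : ℕ}
    (hseg : ∀ j, c ≤ j → j ≤ c' → (l, j) ∈ S) (hcc : c ≤ c') : StripPath S (l, c') (l, c) := by
  induction c', hcc using Nat.le_induction with
  | base => exact .refl
  | succ n hcn ih =>
    exact .head ⟨hseg n hcn (by omega), Or.inl ⟨rfl, Or.inr rfl⟩⟩
      (ih fun j h1 h2 => hseg j h1 (by omega))

lemma stripPath_rowStart {lam mu : List ℕ} {l c : ℕ} (hx : (l, c) ∈ skewCells lam mu) :
    StripPath (skewCells lam mu) (l, c) (l, rowLen mu l + 1) := by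
  rw [mem_skewCells] at hx
  exact stripPath_row_left (fun j h1 h2 => mem_skewCells.2 ⟨hx.1, by omega, by omega⟩) hx.2.1

lemma IsBorderStrip.rowLen_succ_le {lam mu : List ℕ} (hB : IsBorderStrip (skewCells lam mu))
    (hmu : Antitone (rowLen mu)) (hlam : Antitone (rowLen lam)) {l : ℕ} (hl : 1 ≤ l) :
    rowLen lam (l + 1) ≤ rowLen mu l + 1 := by
  by_contra! hlt
  have := hmu (Nat.le_add_right l 1)
  have := hlam (Nat.le_add_right l 1)
  exact hB.2.2 ⟨l, rowLen mu l + 1, mem_skewCells.2 ⟨hl, by omega, by omega⟩,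
    mem_skewCells.2 ⟨hl, by omega, by omega⟩, mem_skewCells.2 ⟨by omega, by omega, by omega⟩,
    mem_skewCells.2 ⟨by omega, by omega, by omega⟩⟩

lemma sum_Icc_tsub_add_eq {f g : ℕ → ℕ} (hf : Antitone f) {h i : ℕ} (hhi : h ≤ i)
    (htop : f h ≤ g h) (hstep : ∀ l, h ≤ l → l < i → g (l + 1) = f l + 1) :
    ∑ l ∈ Icc h i, (g l - f l) + f i = g h + (i - h) := by
  induction i, hhi using Nat.le_induction with
  | base =>
    simp only [Icc_self, sum_singleton]
    omega
  | succ n hhn ih =>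
    rw [sum_Icc_succ_top (by omega), hstep n hhn (by omega)]
    have := ih fun l h1 h2 => hstep l h1 (by omega)
    have := hf (Nat.le_add_right n 1)
    omega

/-- `lam ∖ mu` is the strip occupying rows `h, …, i` in which row `l + 1` of `lam` ends one
column to the right of row `l` of `mu`. -/
structure IsStripAddition (mu lam : List ℕ) (h i : ℕ) : Prop where
  one_le : 1 ≤ h
  le : h ≤ i
  lt_top : rowLen mu h < rowLen lam h
  succ_eq : ∀ l, h ≤ l → l < i → rowLen lam (l + 1) = rowLen mu l + 1
  eq_of_lt : ∀ l, 1 ≤ l → l < h → rowLen lam l = rowLen mu l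
  eq_of_gt : ∀ l, i < l → rowLen lam l = rowLen mu l

lemma IsBorderStrip.isStripAddition {lam mu : List ℕ} {i : ℕ}
    (hB : IsBorderStrip (skewCells lam mu)) (hmu : Antitone (rowLen mu))
    (hlam : Antitone (rowLen lam)) (hle : ∀ l, rowLen mu l ≤ rowLen lam l)
    (hlow : LowestRow (skewCells lam mu) i) : ∃ h, IsStripAddition mu lam h i := by
  classical
  have hrow : ∃ l c, (l, c) ∈ skewCells lam mu := ⟨i, hlow.1⟩
  obtain ⟨ch, hch⟩ := Nat.find_spec hrow
  obtain ⟨ci, hci⟩ := hlow.1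
  have hh1 := (mem_skewCells.1 hch).1
  have hi1 := (mem_skewCells.1 hci).1
  refine ⟨Nat.find hrow, hh1, hlow.2 _ ⟨ch, hch⟩, ?_, fun l hhl hli => ?_,
    fun l hl hlh => rowLen_eq_of_not_exists_mem_skewCells hle hl (Nat.find_min hrow hlh),
    fun l hil => rowLen_eq_of_not_exists_mem_skewCells hle (by omega)
      fun hl => absurd (hlow.2 l hl) (by omega)⟩
  · have := mem_skewCells.1 hch
    omega
  · obtain ⟨c, hc⟩ := StripPath.exists_mem_row (hB.2.1 _ hch _ hci) hch hhl hli.le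
    have := StripPath.lt_rowLen_succ (hB.2.1 _ hci _ hc) hci hli le_rfl
    have := hB.rowLen_succ_le hmu hlam (hh1.trans hhl)
    omega

namespace IsStripAddition

variable {mu lam lam' : List ℕ} {h i : ℕ}

lemma rowLen_lt (hS : IsStripAddition mu lam h i) (hmu : Antitone (rowLen mu)) {l : ℕ}
    (hhl : h ≤ l) (hli : l ≤ i) : rowLen mu l < rowLen lam l := by
  rcases hhl.eq_or_lt with rfl | hlt
  · exact hS.lt_top
  · obtain ⟨l, rfl⟩ : ∃ l', l = l' + 1 := ⟨l - 1, by omega⟩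
    rw [hS.succ_eq l (by omega) (by omega)]
    have := hmu (Nat.le_add_right l 1)
    omega

lemma rowLen_le (hS : IsStripAddition mu lam h i) (hmu : Antitone (rowLen mu)) (l : ℕ) :
    rowLen mu l ≤ rowLen lam l := by
  suffices ∀ l, 1 ≤ l → rowLen mu l ≤ rowLen lam l by
    rcases Nat.eq_zero_or_pos l with rfl | hl
    · exact this 1 le_rfl
    · exact this l hl
  intro l hl
  rcases lt_or_ge l h with hlh | hhl
  · exact (hS.eq_of_lt l hl hlh).ge
  rcases le_or_gt l i with hli | hil
  · exact (hS.rowLen_lt hmu hhl hli).le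
  · exact (hS.eq_of_gt l hil).ge

lemma exists_mem_skewCells_iff (hS : IsStripAddition mu lam h i) (hmu : Antitone (rowLen mu))
    {l : ℕ} : (∃ c, (l, c) ∈ skewCells lam mu) ↔ h ≤ l ∧ l ≤ i := by
  constructor
  · rintro ⟨c, hc⟩
    rw [mem_skewCells] at hc
    by_contra hout
    have : rowLen lam l = rowLen mu l := by
      by_cases hlh : l < h
      · exact hS.eq_of_lt l hc.1 hlh
      · exact hS.eq_of_gt l (by omega)
    omega
  · rintro ⟨hhl, hli⟩
    exact ⟨rowLen mu l + 1,
      mem_skewCells.2 ⟨hS.one_le.trans hhl, by omega, hS.rowLen_lt hmu hhl hli⟩⟩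

lemma lowestRow (hS : IsStripAddition mu lam h i) (hmu : Antitone (rowLen mu)) :
    LowestRow (skewCells lam mu) i :=
  ⟨(hS.exists_mem_skewCells_iff hmu).2 ⟨hS.le, le_rfl⟩,
    fun _ hl => ((hS.exists_mem_skewCells_iff hmu).1 hl).2⟩

lemma stripHeight_eq (hS : IsStripAddition mu lam h i) (hmu : Antitone (rowLen mu)) :
    stripHeight (skewCells lam mu) = i + 1 - h := by
  have hrows : {l | ∃ c, (l, c) ∈ skewCells lam mu} = Set.Icc h i :=
    Set.ext fun _ => hS.exists_mem_skewCells_iff hmu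
  rw [stripHeight, hrows, Set.ncard_Icc_nat]

lemma ncard_add (hS : IsStripAddition mu lam h i) (hmu : Antitone (rowLen mu)) :
    (skewCells lam mu).ncard + rowLen mu i = rowLen lam h + (i - h) := by
  have hcells : skewCells lam mu =
      ↑((Icc h i).biUnion fun l => {l} ×ˢ Ioc (rowLen mu l) (rowLen lam l)) := by
    ext ⟨l, c⟩
    rw [mem_skewCells, mem_coe, mem_biUnion]
    constructor
    · intro hc
      exact ⟨l, mem_Icc.2 ((hS.exists_mem_skewCells_iff hmu).1 ⟨c, mem_skewCells.2 hc⟩),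
        mem_product.2 ⟨mem_singleton_self l, mem_Ioc.2 hc.2⟩⟩
    · rintro ⟨a, ha, hmem⟩
      simp only [mem_product, mem_singleton, mem_Ioc] at hmem
      obtain ⟨rfl, hc⟩ := hmem
      exact ⟨hS.one_le.trans (mem_Icc.1 ha).1, hc⟩
  have hdisj : (Icc h i : Set ℕ).PairwiseDisjoint
      fun l => {l} ×ˢ Ioc (rowLen mu l) (rowLen lam l) :=
    fun _ _ _ _ hab => disjoint_product.2 (Or.inl (disjoint_singleton.2 hab))
  rw [hcells, Set.ncard_coe_finset, card_biUnion hdisj]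
  simp only [card_product, card_singleton, one_mul, Nat.card_Ioc]
  exact sum_Icc_tsub_add_eq hmu hS.le hS.lt_top.le hS.succ_eq

/-- Every cell of the strip is joined to the first cell of its lowest row: go left to the
start of the row, then one step down. -/
lemma stripPath_bottom (hS : IsStripAddition mu lam h i) (hmu : Antitone (rowLen mu))
    {x : ℕ × ℕ} (hx : x ∈ skewCells lam mu) :
    StripPath (skewCells lam mu) x (i, rowLen mu i + 1) := by
  obtain ⟨l, c⟩ := x
  obtain ⟨hhl, hli⟩ := (hS.exists_mem_skewCells_iff hmu).1 ⟨c, hx⟩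
  induction hn : i - l generalizing l c with
  | zero =>
    obtain rfl : l = i := by omega
    exact stripPath_rowStart hx
  | succ n ih =>
    have hdown : (l + 1, rowLen mu l + 1) ∈ skewCells lam mu := by
      have := hS.succ_eq l hhl (by omega)
      have := hmu (Nat.le_add_right l 1)
      rw [mem_skewCells]
      omega
    exact (stripPath_rowStart hx).trans
      (.head ⟨hdown, Or.inr ⟨rfl, Or.inl rfl⟩⟩ (ih _ _ hdown (by omega) (by omega) (by omega)))

lemma isBorderStrip (hS : IsStripAddition mu lam h i) (hmu : Antitone (rowLen mu)) :
    IsBorderStrip (skewCells lam mu) := by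
  have hbot : (i, rowLen mu i + 1) ∈ skewCells lam mu :=
    mem_skewCells.2 ⟨hS.one_le.trans hS.le, by omega, hS.rowLen_lt hmu hS.le le_rfl⟩
  refine ⟨⟨_, hbot⟩, fun x hx y hy =>
    (hS.stripPath_bottom hmu hx).trans (StripPath.symm (hS.stripPath_bottom hmu hy) hy), ?_⟩
  rintro ⟨l, c, hlc, -, -, hsq⟩
  have hhl := ((hS.exists_mem_skewCells_iff hmu).1 ⟨c, hlc⟩).1
  have hli := ((hS.exists_mem_skewCells_iff hmu).1 ⟨c + 1, hsq⟩).2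
  have := hS.succ_eq l hhl (by omega)
  rw [mem_skewCells] at hlc hsq
  omega

lemma rowLen_congr (hS : IsStripAddition mu lam h i) (hS' : IsStripAddition mu lam' h i)
    (htop : rowLen lam h = rowLen lam' h) {l : ℕ} (hl : 1 ≤ l) :
    rowLen lam l = rowLen lam' l := by
  rcases lt_trichotomy l h with hlh | rfl | hhl
  · rw [hS.eq_of_lt l hl hlh, hS'.eq_of_lt l hl hlh]
  · exact htop
  rcases le_or_gt l i with hli | hil
  · obtain ⟨l, rfl⟩ : ∃ l', l = l' + 1 := ⟨l - 1, by omega⟩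
    rw [hS.succ_eq l (by omega) hli, hS'.succ_eq l (by omega) hli]
  · rw [hS.eq_of_gt l hil, hS'.eq_of_gt l hil]

lemma length_eq (hS : IsStripAddition mu lam h i) (hmu : Antitone (rowLen mu))
    (hlam : IsYoung lam) (hlen : mu.length ≤ lam.length) : lam.length = max i mu.length := by
  have hi : i ≤ lam.length :=
    le_length_of_rowLen_pos (Nat.zero_lt_of_lt (hS.rowLen_lt hmu hS.le le_rfl))
  refine le_antisymm (not_lt.1 fun hgt => ?_) (max_le hi hlen)
  have hpos := rowLen_pos hlam (l := max i mu.length + 1) (by omega) hgt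
  rw [hS.eq_of_gt _ (by omega), rowLen_eq_zero (by omega)] at hpos
  exact lt_irrefl 0 hpos

lemma isYoung (hS : IsStripAddition mu lam h i) (hmu : IsYoung mu)
    (hlam : lam.Pairwise (· ≥ ·)) (hlen : lam.length = max i mu.length) : IsYoung lam :=
  isYoung_of_rowLen_pos hlam fun l hl hll => by
    rcases le_or_gt l i with hli | hil
    · have := antitone_rowLen hlam hli
      have := hS.rowLen_lt (antitone_rowLen hmu.1) hS.le le_rfl
      omega
    · rw [hS.eq_of_gt l hil]
      exact rowLen_pos hmu hl (by omega)

end IsStripAddition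

/-- The condition whose least solution `j` is the `m` of the theorem. -/
def StripHeightCond (mu : List ℕ) (k i j : ℕ) : Prop :=
  j = i - 1 ∨ rowLen mu i + k - 1 ≤ rowLen mu (i - j - 1) + j

lemma lt_of_forall_not_stripHeightCond {mu : List ℕ} {k i m : ℕ} (hi : 1 ≤ i)
    (hmin : ∀ j < m, ¬ StripHeightCond mu k i j) : m < i := by
  by_contra! hle
  exact hmin (i - 1) (by omega) (Or.inl rfl)

lemma length_deltaList (mu : List ℕ) (k i m : ℕ) :
    (deltaList mu k i m).length = max i mu.length := by
  simp [deltaList]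

lemma rowLen_deltaList (mu : List ℕ) (k i m : ℕ) {t : ℕ} (ht : 1 ≤ t) :
    rowLen (deltaList mu k i m) t =
      if t < i - m then rowLen mu t
      else if t = i - m then rowLen mu i + k - m
      else if t ≤ i then rowLen mu (t - 1) + 1
      else rowLen mu t := by
  rcases le_or_gt t (max i mu.length) with h | h
  · rw [rowLen, List.getD_eq_getElem _ _ (by rw [length_deltaList]; omega)]
    simp only [deltaList, List.getElem_map, List.getElem_range, Nat.sub_add_cancel ht]
  · rw [rowLen_eq_zero (by rw [length_deltaList]; omega), rowLen_eq_zero (by omega)]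
    split_ifs <;> omega

lemma isStripAddition_deltaList {mu : List ℕ} {k i m : ℕ} (hk : 1 ≤ k) (hi : 1 ≤ i)
    (hmin : ∀ j < m, ¬ StripHeightCond mu k i j) :
    IsStripAddition mu (deltaList mu k i m) (i - m) i := by
  have hmi := lt_of_forall_not_stripHeightCond hi hmin
  refine ⟨by omega, by omega, ?_, fun l hl hli => ?_, fun l hl hlt => ?_, fun l hil => ?_⟩
  · rw [rowLen_deltaList _ _ _ _ (by omega), if_neg (by omega), if_pos rfl]
    rcases Nat.eq_zero_or_pos m with rfl | hm
    · simp only [Nat.sub_zero]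
      omega
    · have := hmin (m - 1) (by omega)
      rw [StripHeightCond, show i - (m - 1) - 1 = i - m by omega] at this
      omega
  · rw [rowLen_deltaList _ _ _ _ (by omega), if_neg (by omega), if_neg (by omega),
      if_pos (by omega), Nat.add_sub_cancel]
  · rw [rowLen_deltaList _ _ _ _ hl, if_pos hlt]
  · rw [rowLen_deltaList _ _ _ _ (by omega), if_neg (by omega), if_neg (by omega),
      if_neg (by omega)]

lemma rowLen_deltaList_sub {mu : List ℕ} {k i m : ℕ} (hmi : m < i) :
    rowLen (deltaList mu k i m) (i - m) = rowLen mu i + k - m := by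
  rw [rowLen_deltaList _ _ _ _ (by omega), if_neg (by omega), if_pos rfl]

namespace IsStripAddition

variable {mu lam : List ℕ} {h i k m : ℕ}

lemma sub_eq (hS : IsStripAddition mu lam h i) (hmu : Antitone (rowLen mu))
    (hlam : Antitone (rowLen lam)) (hcard : (skewCells lam mu).ncard = k)
    (hm : StripHeightCond mu k i m) (hmin : ∀ j < m, ¬ StripHeightCond mu k i j) :
    i - h = m := by
  have hsum := hS.ncard_add hmu
  have htop := hS.lt_top
  have hh1 := hS.one_le
  have hhi := hS.le
  rw [hcard] at hsum
  have hle : m ≤ i - h := by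
    by_contra! hlt
    apply hmin (i - h) hlt
    rcases hh1.eq_or_lt with h1 | h1
    · exact Or.inl (by omega)
    · right
      rw [show i - (i - h) - 1 = h - 1 by omega, ← hS.eq_of_lt (h - 1) (by omega) (by omega)]
      have := hlam (Nat.sub_le h 1)
      omega
  by_contra! hne
  rcases hm with hm | hm
  · omega
  · have hrow := hS.succ_eq (i - m - 1) (by omega) (by omega)
    rw [show i - m - 1 + 1 = i - m by omega] at hrow
    have := hlam (show h ≤ i - m by omega)
    omega

lemma eq_deltaList (hS : IsStripAddition mu lam h i) (hmu : IsYoung mu) (hlam : IsYoung lam)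
    (hlen : mu.length ≤ lam.length) (hk : 1 ≤ k) (hcard : (skewCells lam mu).ncard = k)
    (hm : StripHeightCond mu k i m) (hmin : ∀ j < m, ¬ StripHeightCond mu k i j) :
    lam = deltaList mu k i m := by
  have hmu' := antitone_rowLen hmu.1
  have hhm := hS.sub_eq hmu' (antitone_rowLen hlam.1) hcard hm hmin
  have hsum := hS.ncard_add hmu'
  have hδ := isStripAddition_deltaList hk (hS.one_le.trans hS.le) hmin
  obtain rfl : h = i - m := by have := hS.le; omega
  refine eq_of_rowLen_eq ?_ (fun l hl => hS.rowLen_congr hδ ?_ hl)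
  · rw [hS.length_eq hmu' hlam hlen, length_deltaList]
  · rw [rowLen_deltaList_sub (by have := hS.one_le; omega)]
    omega

end IsStripAddition

theorem borderStrip_add_iff_general (mu : List ℕ) (hmu : IsYoung mu) (k : ℕ) (hk : 1 ≤ k)
    (i : ℕ) (hi1 : 1 ≤ i) (m : ℕ)
    (hm : m = i - 1 ∨ rowLen mu i + k - 1 ≤ rowLen mu (i - m - 1) + m)
    (hmin : ∀ j < m, ¬ (j = i - 1 ∨ rowLen mu i + k - 1 ≤ rowLen mu (i - j - 1) + j)) :
    ((∃ lam : List ℕ, IsYoung lam ∧ YoungContains mu lam ∧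
        IsBorderStrip (skewCells lam mu) ∧ (skewCells lam mu).ncard = k ∧
        LowestRow (skewCells lam mu) i) ↔
      (deltaList mu k i m).Pairwise (· ≥ ·)) ∧
    ((deltaList mu k i m).Pairwise (· ≥ ·) →
      (∀ lam : List ℕ, IsYoung lam → YoungContains mu lam →
          IsBorderStrip (skewCells lam mu) → (skewCells lam mu).ncard = k →
          LowestRow (skewCells lam mu) i → lam = deltaList mu k i m) ∧
      stripHeight (skewCells (deltaList mu k i m) mu) = m + 1) := by
  have hmu' := antitone_rowLen hmu.1
  have hmi := lt_of_forall_not_stripHeightCond hi1 hmin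
  have hδ := isStripAddition_deltaList hk hi1 hmin
  have unique : ∀ lam, IsYoung lam → YoungContains mu lam → IsBorderStrip (skewCells lam mu) →
      (skewCells lam mu).ncard = k → LowestRow (skewCells lam mu) i →
      lam = deltaList mu k i m := by
    intro lam hY hC hB hcard hlow
    obtain ⟨h, hS⟩ := hB.isStripAddition hmu' (antitone_rowLen hY.1) hC.2 hlow
    exact hS.eq_deltaList hmu hY hC.1 hk hcard hm hmin
  have hcard : (skewCells (deltaList mu k i m) mu).ncard = k := by
    have := hδ.ncard_add hmu'
    have := hδ.lt_top
    rw [rowLen_deltaList_sub hmi] at *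
    omega
  refine ⟨⟨fun ⟨lam, hY, hC, hB, hc, hlow⟩ => unique lam hY hC hB hc hlow ▸ hY.1, fun hs => ?_⟩,
    fun _ => ⟨unique, by rw [hδ.stripHeight_eq hmu']; omega⟩⟩
  have hlen := length_deltaList mu k i m
  exact ⟨_, hδ.isYoung hmu hs hlen, ⟨hlen ▸ le_max_right _ _, hδ.rowLen_le hmu'⟩,
    hδ.isBorderStrip hmu', hcard, hδ.lowestRow hmu'⟩

/-- Adding a border strip of size `k` with lowest row `i` to a Young diagram `μ`:
it exists iff `δ` is nonincreasing, in which case it is unique, equals `δ`, and the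
strip has height `m+1`; here `m` is the least `j ≥ 0` with `j = i−1` or
`μ_{i−j−1} + j ≥ μ_i + k − 1`. -/
theorem borderStrip_add_iff (mu : List ℕ) (hmu : IsYoung mu) (k : ℕ) (hk : 1 ≤ k)
    (i : ℕ) (hi1 : 1 ≤ i) (hi2 : i ≤ mu.length + k) (m : ℕ)
    (hm : m = i - 1 ∨ rowLen mu i + k - 1 ≤ rowLen mu (i - m - 1) + m)
    (hmin : ∀ j < m, ¬ (j = i - 1 ∨ rowLen mu i + k - 1 ≤ rowLen mu (i - j - 1) + j)) :
    ((∃ lam : List ℕ, IsYoung lam ∧ YoungContains mu lam ∧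
        IsBorderStrip (skewCells lam mu) ∧ (skewCells lam mu).ncard = k ∧
        LowestRow (skewCells lam mu) i) ↔
      (deltaList mu k i m).Pairwise (· ≥ ·)) ∧
    ((deltaList mu k i m).Pairwise (· ≥ ·) →
      (∀ lam : List ℕ, IsYoung lam → YoungContains mu lam →
          IsBorderStrip (skewCells lam mu) → (skewCells lam mu).ncard = k →
          LowestRow (skewCells lam mu) i → lam = deltaList mu k i m) ∧
      stripHeight (skewCells (deltaList mu k i m) mu) = m + 1) :=
  borderStrip_add_iff_general mu hmu k hk i hi1 m hm hmin
end

section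
/- Content-sum formula for adding a border strip: let μ = (μ_1 ≥ … ≥ μ_r > 0) be a Young diagram, k ≥ 1, 1 ≤ i ≤ r+k, with μ_l = 0 for l > r; let m be the least integer j ≥ 0 such that either j = i−1 or μ_{i−j−1} + j ≥ μ_i + k − 1, and let δ = (μ_1, …, μ_{i−m−1}, μ_i+k−m, μ_{i−m}+1, …, μ_{i−1}+1, μ_{i+1}, …, μ_r). If δ is nonincreasing (hence a Young diagram), then 2·∑_{(l,c) cell of δ} (l−c) = 2·∑_{(l,c) cell of μ} (l−c) + 2k(i − μ_i) − k(k+1). -/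
/-- The sum of the contents `l - c` over the cells `(l, c)` of a Young diagram. -/
def contentSum (lam : List ℕ) : ℤ :=
  ∑ l ∈ Finset.range lam.length, ∑ c ∈ Finset.range (lam.getD l 0),
    ((l + 1 : ℤ) - (c + 1 : ℤ))

open Finset

def twiceRowContent (t a : ℕ) : ℤ := a * (2 * t - a - 1)

lemma twiceRowContent_add (t a k : ℕ) :
    twiceRowContent t (a + k) = twiceRowContent t a + 2 * k * ((t : ℤ) - a) - k * (k + 1) := by
  simp only [twiceRowContent]; push_cast; ring

lemma twiceRowContent_succ_succ (t a : ℕ) :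
    twiceRowContent (t + 1) (a + 1) = twiceRowContent t a + 2 * t := by
  simp only [twiceRowContent]; push_cast; ring

lemma two_mul_sum_content_row (t a : ℕ) :
    2 * ∑ c ∈ range a, ((t : ℤ) - (c + 1)) = twiceRowContent t a := by
  induction a with
  | zero => simp [twiceRowContent]
  | succ a ih =>
    rw [sum_range_succ, mul_add, ih]
    simp only [twiceRowContent]; push_cast; ring

lemma sum_Icc_one_eq_sum_range {M : Type*} [AddCommMonoid M] (f : ℕ → M) (n : ℕ) :
    ∑ t ∈ Icc 1 n, f t = ∑ l ∈ range n, f (l + 1) := by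
  rw [range_eq_Ico, sum_Ico_add' f 0 n 1, zero_add, Ico_add_one_right_eq_Icc]

lemma rowLen_succ (lam : List ℕ) (l : ℕ) : rowLen lam (l + 1) = lam.getD l 0 := rfl

lemma two_mul_contentSum (lam : List ℕ) {n : ℕ} (hn : lam.length ≤ n) :
    2 * contentSum lam = ∑ t ∈ Icc 1 n, twiceRowContent t (rowLen lam t) := by
  have hout : ∀ t ∈ Icc 1 n, t ∉ Icc 1 lam.length → twiceRowContent t (rowLen lam t) = 0 := by
    intro t ht ht'
    simp only [mem_Icc] at ht ht'
    rw [rowLen, List.getD_eq_default _ _ (by omega)]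
    simp [twiceRowContent]
  rw [← sum_subset (Icc_subset_Icc_right hn) hout, sum_Icc_one_eq_sum_range, contentSum, mul_sum]
  refine sum_congr rfl fun l _ => ?_
  rw [rowLen_succ, ← two_mul_sum_content_row]
  push_cast; rfl

def deltaRow (mu : List ℕ) (k i m t : ℕ) : ℕ :=
  if t < i - m then rowLen mu t
  else if t = i - m then rowLen mu i + k - m
  else if t ≤ i then rowLen mu (t - 1) + 1
  else rowLen mu t

lemma rowLen_deltaList_s10 (mu : List ℕ) (k i m : ℕ) {t : ℕ} (ht : t ∈ Icc 1 (max i mu.length)) :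
    rowLen (deltaList mu k i m) t = deltaRow mu k i m t := by
  simp only [mem_Icc] at ht
  obtain ⟨l, rfl⟩ : ∃ l, t = l + 1 := ⟨t - 1, by omega⟩
  rw [rowLen_succ, deltaList, List.getD_eq_getElem _ _ (by simp; omega)]
  simp [deltaRow]

lemma two_mul_contentSum_deltaList (mu : List ℕ) (k i m : ℕ) :
    2 * contentSum (deltaList mu k i m) =
      ∑ t ∈ Icc 1 (max i mu.length), twiceRowContent t (deltaRow mu k i m t) := by
  rw [two_mul_contentSum _ (n := max i mu.length) (by simp [deltaList])]
  exact sum_congr rfl fun t ht => by rw [rowLen_deltaList_s10 mu k i m ht]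

lemma sum_deltaRow_zero (mu : List ℕ) {k i n : ℕ} (hi : i ∈ Icc 1 n) :
    ∑ t ∈ Icc 1 n, twiceRowContent t (deltaRow mu k i 0 t) =
      ∑ t ∈ Icc 1 n, twiceRowContent t (rowLen mu t) + 2 * k * ((i : ℤ) - rowLen mu i)
        - k * (k + 1) := by
  have hdiff : ∑ t ∈ Icc 1 n,
      (twiceRowContent t (deltaRow mu k i 0 t) - twiceRowContent t (rowLen mu t)) =
        twiceRowContent i (rowLen mu i + k) - twiceRowContent i (rowLen mu i) := by
    refine (sum_eq_single_of_mem i hi fun t _ hti => ?_).trans ?_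
    · simp only [deltaRow]
      split_ifs <;> first | exact sub_self _ | omega
    · simp [deltaRow]
  rw [sum_sub_distrib, twiceRowContent_add] at hdiff
  linarith

lemma sum_deltaRow_succ (mu : List ℕ) {k i m n : ℕ} (hmi : m + 1 < i)
    (hmk : m + 1 ≤ rowLen mu i + k) (hin : i ≤ n) :
    ∑ t ∈ Icc 1 n, twiceRowContent t (deltaRow mu k i (m + 1) t) =
      ∑ t ∈ Icc 1 n, twiceRowContent t (deltaRow mu k i m t) := by
  obtain ⟨p, hp⟩ : ∃ p, i = p + (m + 1) := ⟨i - (m + 1), by omega⟩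
  obtain ⟨c, hc⟩ : ∃ c, rowLen mu i + k = c + (m + 1) := ⟨_, (Nat.sub_add_cancel hmk).symm⟩
  have h₁ : deltaRow mu k i (m + 1) p = c := by
    rw [deltaRow, if_neg (by omega), if_pos (by omega), hc, Nat.add_sub_cancel]
  have h₂ : deltaRow mu k i m p = rowLen mu p := by
    rw [deltaRow, if_pos (by omega)]
  have h₃ : deltaRow mu k i (m + 1) (p + 1) = rowLen mu p + 1 := by
    rw [deltaRow, if_neg (by omega), if_neg (by omega), if_pos (by omega), Nat.add_sub_cancel]
  have h₄ : deltaRow mu k i m (p + 1) = c + 1 := by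
    rw [deltaRow, if_neg (by omega), if_pos (by omega)]
    omega
  have hoff : ∀ t ∈ Icc 1 n, t ≠ p ∧ t ≠ p + 1 →
      twiceRowContent t (deltaRow mu k i (m + 1) t) - twiceRowContent t (deltaRow mu k i m t)
        = 0 := by
    intro t _ ⟨htp, htp'⟩
    simp only [deltaRow]
    split_ifs <;> first | exact sub_self _ | omega
  rw [← sub_eq_zero, ← sum_sub_distrib,
    sum_eq_add_of_mem p (p + 1) (by simp; omega) (by simp; omega) (by omega) hoff,
    h₁, h₂, h₃, h₄, twiceRowContent_succ_succ, twiceRowContent_succ_succ]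
  ring

lemma sum_deltaRow (mu : List ℕ) {k i m n : ℕ} (hmi : m < i) (hmk : m ≤ rowLen mu i + k)
    (hin : i ≤ n) :
    ∑ t ∈ Icc 1 n, twiceRowContent t (deltaRow mu k i m t) =
      ∑ t ∈ Icc 1 n, twiceRowContent t (rowLen mu t) + 2 * k * ((i : ℤ) - rowLen mu i)
        - k * (k + 1) := by
  induction m with
  | zero => exact sum_deltaRow_zero mu (by simp; omega)
  | succ m ih => rw [sum_deltaRow_succ mu hmi hmk hin, ih (by omega) (by omega)]

theorem contentSum_deltaList_general (mu : List ℕ) (k : ℕ)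
    (i : ℕ) (hi1 : 1 ≤ i) (m : ℕ)
    (hmin : ∀ j < m, ¬ (j = i - 1 ∨ rowLen mu i + k - 1 ≤ rowLen mu (i - j - 1) + j)) :
    2 * contentSum (deltaList mu k i m) =
      2 * contentSum mu + 2 * k * ((i : ℤ) - (rowLen mu i : ℤ)) - k * (k + 1) := by
  have hmi : m < i := by
    by_contra! h
    exact hmin (i - 1) (by omega) (Or.inl rfl)
  have hmk : m ≤ rowLen mu i + k := by
    rcases Nat.eq_zero_or_pos m with h | h
    · omega
    · have hprev := hmin (m - 1) (by omega)
      omega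
  rw [two_mul_contentSum_deltaList, two_mul_contentSum mu (le_max_right i mu.length),
    sum_deltaRow mu hmi hmk (le_max_left i mu.length)]

/-- Content-sum formula for adding a border strip: if `δ` is nonincreasing then
`2 ∑_{(l,c)∈δ} (l−c) = 2 ∑_{(l,c)∈μ} (l−c) + 2k(i − μ_i) − k(k+1)`. -/
theorem contentSum_deltaList (mu : List ℕ) (hmu : IsYoung mu) (k : ℕ) (hk : 1 ≤ k)
    (i : ℕ) (hi1 : 1 ≤ i) (hi2 : i ≤ mu.length + k) (m : ℕ)
    (hm : m = i - 1 ∨ rowLen mu i + k - 1 ≤ rowLen mu (i - m - 1) + m)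
    (hmin : ∀ j < m, ¬ (j = i - 1 ∨ rowLen mu i + k - 1 ≤ rowLen mu (i - j - 1) + j))
    (hsorted : (deltaList mu k i m).Pairwise (· ≥ ·)) :
    2 * contentSum (deltaList mu k i m) =
      2 * contentSum mu + 2 * k * ((i : ℤ) - (rowLen mu i : ℤ)) - k * (k + 1) :=
  contentSum_deltaList_general mu k i hi1 m hmin
end

section
/- For every real τ > 2 there exist β_max ∈ (0, 1/2) and c > 0 such that μ_τ(β) ≥ μ_τ(β_max) + c·(β − β_max)² for all β ∈ [0, 1/2] (in particular β_max is the unique minimiser of μ_τ on [0, 1/2]), and moreover β_max < 1 − 1/τ. -/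
/-! The derivative `φ β = log β - log (1 - β) + τ (1 - 2β)` of `μ_τ` vanishes at `1/2` and tends
to `-∞` at `0⁺`, while `φ' β = 1/(β(1-β)) - 2τ` decreases on `(0, 1/2]`, so `φ` is concave there.
Since `φ'(1/2) = 4 - 2τ < 0`, `φ` is positive just left of `1/2`, hence has a zero `β_max < 1/2`.
By the mean value theorem `φ' ≥ m > 0` on `(0, ξ]` for some `ξ > β_max`, so
`μ_τ - (m/2)(β - β_max)²` is minimal at `β_max` on `[0, ξ]`. By concavity `φ ≥ 0` on
`[β_max, 1/2]`, so `μ_τ` increases on `[ξ, 1/2]` and the quadratic bound extends there with a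
smaller constant. -/

/-- `μ_τ(β) = β log β + (1−β) log(1−β) + τ β(1−β)`; since `Real.log 0 = 0` in Mathlib,
this automatically satisfies the convention `μ_τ(0) = 0`. -/
noncomputable def muFun (τ β : ℝ) : ℝ :=
  β * Real.log β + (1 - β) * Real.log (1 - β) + τ * β * (1 - β)

open Real Set Filter Topology

theorem add_half_mul_sq_le_of_le_deriv2 {f f' f'' : ℝ → ℝ} {a b x₀ m : ℝ}
    (hf : ContinuousOn f (Icc a b)) (hx₀ : x₀ ∈ Ioo a b)
    (hf' : ∀ x ∈ Ioo a b, HasDerivAt f (f' x) x)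
    (hf'' : ∀ x ∈ Ioo a b, HasDerivAt f' (f'' x) x)
    (hm : ∀ x ∈ Ioo a b, m ≤ f'' x) (hcrit : f' x₀ = 0) :
    ∀ x ∈ Icc a b, f x₀ + m / 2 * (x - x₀) ^ 2 ≤ f x := by
  set g : ℝ → ℝ := fun y => f y - m / 2 * (y - x₀) ^ 2 with hg
  set ψ : ℝ → ℝ := fun y => f' y - m * (y - x₀) with hψ
  have hψ' : ∀ x ∈ Ioo a b, HasDerivAt ψ (f'' x - m) x :=
    fun x hx => ((hf'' x hx).sub (((hasDerivAt_id' x).sub_const x₀).const_mul m)).congr_deriv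
      (by ring)
  have hg' : ∀ x ∈ Ioo a b, HasDerivAt g (ψ x) x :=
    fun x hx => ((hf' x hx).sub ((((hasDerivAt_id' x).sub_const x₀).pow 2).const_mul
      (m / 2))).congr_deriv (by simp only [hψ]; ring)
  have hψ_mono : MonotoneOn ψ (Ioo a b) := by
    refine monotoneOn_of_hasDerivWithinAt_nonneg (f' := fun x => f'' x - m) (convex_Ioo a b)
      (fun x hx => (hψ' x hx).continuousAt.continuousWithinAt) ?_ ?_ <;> rw [interior_Ioo]
    · exact fun x hx => (hψ' x hx).hasDerivWithinAt
    · exact fun x hx => sub_nonneg.2 (hm x hx)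
  have hψx₀ : ψ x₀ = 0 := by simp [hψ, hcrit]
  have hgc : ContinuousOn g (Icc a b) := hf.sub (by fun_prop)
  have hg_anti : AntitoneOn g (Icc a x₀) := by
    refine antitoneOn_of_hasDerivWithinAt_nonpos (f' := ψ) (convex_Icc a x₀)
      (hgc.mono (Icc_subset_Icc_right hx₀.2.le)) ?_ ?_ <;> rw [interior_Icc]
    · exact fun y hy => (hg' y ⟨hy.1, hy.2.trans hx₀.2⟩).hasDerivWithinAt
    · exact fun y hy => hψx₀ ▸ hψ_mono ⟨hy.1, hy.2.trans hx₀.2⟩ hx₀ hy.2.le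
  have hg_mono : MonotoneOn g (Icc x₀ b) := by
    refine monotoneOn_of_hasDerivWithinAt_nonneg (f' := ψ) (convex_Icc x₀ b)
      (hgc.mono (Icc_subset_Icc_left hx₀.1.le)) ?_ ?_ <;> rw [interior_Icc]
    · exact fun y hy => (hg' y ⟨hx₀.1.trans hy.1, hy.2⟩).hasDerivWithinAt
    · exact fun y hy => hψx₀ ▸ hψ_mono hx₀ ⟨hx₀.1.trans hy.1, hy.2⟩ hy.1.le
  intro x hx
  suffices g x₀ ≤ g x by simp only [hg, sub_self] at this; linarith
  rcases le_total x x₀ with hxx₀ | hx₀x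
  · exact hg_anti ⟨hx.1, hxx₀⟩ ⟨hx₀.1.le, le_rfl⟩ hxx₀
  · exact hg_mono ⟨le_rfl, hx₀.2.le⟩ ⟨hx₀x, hx.2⟩ hx₀x

theorem add_mul_sq_le_of_le_of_monotoneOn {f : ℝ → ℝ} {a b x₀ ξ m : ℝ}
    (hax₀ : a ≤ x₀) (hx₀ξ : x₀ < ξ) (hξb : ξ ≤ b) (hm : 0 ≤ m)
    (hnear : ∀ x ∈ Icc a ξ, f x₀ + m * (x - x₀) ^ 2 ≤ f x) (hmono : MonotoneOn f (Icc ξ b)) :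
    ∀ x ∈ Icc a b, f x₀ + m * ((ξ - x₀) / (b - x₀)) ^ 2 * (x - x₀) ^ 2 ≤ f x := by
  have hbx₀ : 0 < b - x₀ := by linarith
  have hr : ∀ y, x₀ ≤ y → y ≤ b → ((y - x₀) / (b - x₀)) ^ 2 ≤ 1 := fun y h₀ h₁ =>
    pow_le_one₀ (div_nonneg (by linarith) hbx₀.le) ((div_le_one hbx₀).2 (by linarith))
  intro x hx
  rcases le_total x ξ with hxξ | hξx
  · have hc : m * ((ξ - x₀) / (b - x₀)) ^ 2 ≤ m :=
      mul_le_of_le_one_right hm (hr ξ hx₀ξ.le hξb)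
    linarith [hnear x ⟨hx.1, hxξ⟩, mul_le_mul_of_nonneg_right hc (sq_nonneg (x - x₀))]
  · have hc : m * (ξ - x₀) ^ 2 * ((x - x₀) / (b - x₀)) ^ 2 ≤ m * (ξ - x₀) ^ 2 :=
      mul_le_of_le_one_right (mul_nonneg hm (sq_nonneg _)) (hr x (by linarith) hx.2)
    have hfξ := hnear ξ ⟨hax₀.trans hx₀ξ.le, le_rfl⟩
    have hfx := hmono ⟨le_rfl, hξb⟩ ⟨hξx, hx.2⟩ hξx
    have : m * ((ξ - x₀) / (b - x₀)) ^ 2 * (x - x₀) ^ 2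
        = m * (ξ - x₀) ^ 2 * ((x - x₀) / (b - x₀)) ^ 2 := by ring
    linarith

lemma muFun_eq_sub_binEntropy (τ : ℝ) :
    muFun τ = fun β => τ * β * (1 - β) - binEntropy β := by
  funext β; simp only [muFun, binEntropy, log_inv]; ring

lemma continuous_muFun (τ : ℝ) : Continuous (muFun τ) := by
  rw [muFun_eq_sub_binEntropy]; fun_prop

noncomputable def muDeriv (τ β : ℝ) : ℝ := log β - log (1 - β) + τ * (1 - 2 * β)

lemma hasDerivAt_muFun (τ : ℝ) {β : ℝ} (h0 : β ≠ 0) (h1 : β ≠ 1) :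
    HasDerivAt (muFun τ) (muDeriv τ β) β := by
  rw [muFun_eq_sub_binEntropy]
  exact ((((hasDerivAt_id' β).const_mul τ).mul ((hasDerivAt_id' β).const_sub 1)).sub
    (hasDerivAt_binEntropy h0 h1)).congr_deriv (by simp only [muDeriv]; ring)

lemma hasDerivAt_muDeriv (τ : ℝ) {β : ℝ} (h0 : β ≠ 0) (h1 : β ≠ 1) :
    HasDerivAt (muDeriv τ) ((β * (1 - β))⁻¹ - 2 * τ) β := by
  have h1' : 1 - β ≠ 0 := sub_ne_zero.2 h1.symm
  exact ((hasDerivAt_log h0).sub ((hasDerivAt_log h1').comp β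
    ((hasDerivAt_id' β).const_sub 1))).add
    ((((hasDerivAt_id' β).const_mul 2).const_sub 1).const_mul τ) |>.congr_deriv
    (by field_simp; ring)

lemma muDeriv_half (τ : ℝ) : muDeriv τ (1 / 2) = 0 := by norm_num [muDeriv]

lemma tendsto_muDeriv_nhdsGT_zero (τ : ℝ) : Tendsto (muDeriv τ) (𝓝[>] 0) atBot := by
  have hrest : ContinuousAt (fun β => τ * (1 - 2 * β) - log (1 - β)) 0 := by
    fun_prop (disch := norm_num)
  exact (tendsto_log_nhdsGT_zero.atBot_add (hrest.tendsto.mono_left nhdsWithin_le_nhds)).congr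
    fun β => by simp only [muDeriv]; ring

lemma antitoneOn_inv_mul_one_sub : AntitoneOn (fun x : ℝ => (x * (1 - x))⁻¹) (Ioc 0 (1 / 2)) :=
  fun x hx y hy hxy => inv_anti₀ (mul_pos hx.1 (by linarith [hx.2])) (by nlinarith [hy.2])

lemma concaveOn_muDeriv (τ : ℝ) : ConcaveOn ℝ (Ioc 0 (1 / 2)) (muDeriv τ) := by
  have hd : ∀ x ∈ Ioc (0 : ℝ) (1 / 2), HasDerivAt (muDeriv τ) ((x * (1 - x))⁻¹ - 2 * τ) x :=
    fun x hx => hasDerivAt_muDeriv τ hx.1.ne' (by linarith [hx.2])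
  refine AntitoneOn.concaveOn_of_deriv (convex_Ioc _ _)
    (fun x hx => (hd x hx).continuousAt.continuousWithinAt) ?_ ?_ <;> rw [interior_Ioc]
  · exact fun x hx => (hd x (Ioo_subset_Ioc_self hx)).differentiableAt.differentiableWithinAt
  · intro x hx y hy hxy
    rw [(hd x (Ioo_subset_Ioc_self hx)).deriv, (hd y (Ioo_subset_Ioc_self hy)).deriv]
    linarith [antitoneOn_inv_mul_one_sub (Ioo_subset_Ioc_self hx) (Ioo_subset_Ioc_self hy) hxy]

lemma exists_muDeriv_pos {τ : ℝ} (hτ : 2 < τ) : ∃ p ∈ Ioo (0 : ℝ) (1 / 2), 0 < muDeriv τ p := by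
  have hd : deriv (muDeriv τ) (1 / 2) < 0 := by
    rw [(hasDerivAt_muDeriv τ (by norm_num) (by norm_num)).deriv]; norm_num; linarith
  obtain ⟨p, hsign, hp⟩ := (((eventually_nhdsWithin_sign_eq_of_deriv_neg hd
    (muDeriv_half τ)).filter_mono nhdsWithin_le_nhds).and
    (Ioo_mem_nhdsLT (by norm_num : (0 : ℝ) < 1 / 2))).exists
  refine ⟨p, hp, sign_eq_one_iff.1 ?_⟩
  rw [hsign, sign_eq_one_iff]; linarith [hp.2]

lemma muDeriv_nonneg {τ β₀ : ℝ} (h0 : 0 < β₀) (h1 : β₀ ≤ 1 / 2) (hcrit : muDeriv τ β₀ = 0) :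
    ∀ x ∈ Icc β₀ (1 / 2), 0 ≤ muDeriv τ x := fun x hx => by
  have := (concaveOn_muDeriv τ).min_le_of_mem_Icc ⟨h0, h1⟩ ⟨by norm_num, le_rfl⟩ hx
  rwa [hcrit, muDeriv_half, min_self] at this

lemma monotoneOn_muFun {τ a b : ℝ} (ha : 0 < a) (hb : b < 1)
    (h : ∀ x ∈ Ioo a b, 0 ≤ muDeriv τ x) : MonotoneOn (muFun τ) (Icc a b) := by
  refine monotoneOn_of_hasDerivWithinAt_nonneg (f' := muDeriv τ) (convex_Icc a b)
    (continuous_muFun τ).continuousOn ?_ ?_ <;> rw [interior_Icc]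
  · exact fun x hx =>
      (hasDerivAt_muFun τ (ha.trans hx.1).ne' (hx.2.trans hb).ne).hasDerivWithinAt
  · exact h

lemma exists_muDeriv_eq_zero {τ : ℝ} (hτ : 2 < τ) : ∃ βmax ξ : ℝ, 0 < βmax ∧ βmax < ξ ∧
    ξ < 1 / 2 ∧ muDeriv τ βmax = 0 ∧ 0 < (ξ * (1 - ξ))⁻¹ - 2 * τ := by
  obtain ⟨p, ⟨hp0, hp⟩, hφp⟩ := exists_muDeriv_pos hτ
  obtain ⟨a, hφa, ha0, hap⟩ := (((tendsto_muDeriv_nhdsGT_zero τ).eventually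
    (eventually_lt_atBot 0)).and (Ioo_mem_nhdsGT hp0)).exists
  have hd : ∀ x ∈ Icc a p, HasDerivAt (muDeriv τ) ((x * (1 - x))⁻¹ - 2 * τ) x :=
    fun x hx => hasDerivAt_muDeriv τ (ha0.trans_le hx.1).ne' (by linarith [hx.2])
  have hcont : ContinuousOn (muDeriv τ) (Icc a p) :=
    fun x hx => (hd x hx).continuousAt.continuousWithinAt
  obtain ⟨βmax, ⟨haβ, hβp⟩, hcrit⟩ := intermediate_value_Ioo hap.le hcont ⟨hφa, hφp⟩
  obtain ⟨ξ, ⟨hβξ, hξp⟩, hslope⟩ := exists_hasDerivAt_eq_slope (muDeriv τ) _ hβp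
    (hcont.mono (Icc_subset_Icc_left haβ.le)) fun x hx => hd x ⟨by linarith [hx.1], hx.2.le⟩
  refine ⟨βmax, ξ, ha0.trans haβ, hβξ, hξp.trans hp, hcrit, ?_⟩
  rw [hslope, hcrit]
  exact div_pos (by linarith) (by linarith)

/-- For `τ > 2` there are `β_max ∈ (0, 1/2)` and `c > 0` with
`μ_τ(β) ≥ μ_τ(β_max) + c (β − β_max)²` on `[0, 1/2]`, and moreover `β_max < 1 − 1/τ`. -/
theorem muFun_quadratic_min (τ : ℝ) (hτ : 2 < τ) :
    ∃ βmax c : ℝ, 0 < βmax ∧ βmax < 1 / 2 ∧ 0 < c ∧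
      (∀ β ∈ Set.Icc (0 : ℝ) (1 / 2),
        muFun τ βmax + c * (β - βmax) ^ 2 ≤ muFun τ β) ∧
      βmax < 1 - 1 / τ := by
  obtain ⟨βmax, ξ, hβ0, hβξ, hξ, hcrit, hm⟩ := exists_muDeriv_eq_zero hτ
  set m := (ξ * (1 - ξ))⁻¹ - 2 * τ
  have hnear : ∀ β ∈ Icc 0 ξ, muFun τ βmax + m / 2 * (β - βmax) ^ 2 ≤ muFun τ β :=
    add_half_mul_sq_le_of_le_deriv2 (continuous_muFun τ).continuousOn ⟨hβ0, hβξ⟩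
      (fun x hx => hasDerivAt_muFun τ hx.1.ne' (by linarith [hx.2]))
      (fun x hx => hasDerivAt_muDeriv τ hx.1.ne' (by linarith [hx.2]))
      (fun x hx => sub_le_sub_right (antitoneOn_inv_mul_one_sub ⟨hx.1, by linarith [hx.2]⟩
        ⟨hβ0.trans hβξ, hξ.le⟩ hx.2.le) _) hcrit
  have hmono : MonotoneOn (muFun τ) (Icc ξ (1 / 2)) :=
    monotoneOn_muFun (hβ0.trans hβξ) (by norm_num) fun x hx =>
      muDeriv_nonneg hβ0 (by linarith) hcrit x ⟨by linarith [hx.1], hx.2.le⟩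
  have hξβ : 0 < ξ - βmax := by linarith
  have hhalfβ : 0 < 1 / 2 - βmax := by linarith
  refine ⟨βmax, m / 2 * ((ξ - βmax) / (1 / 2 - βmax)) ^ 2, hβ0, by linarith, by positivity,
    add_mul_sq_le_of_le_of_monotoneOn hβ0.le hβξ hξ.le (by positivity) hnear hmono, ?_⟩
  linarith [one_div_lt_one_div_of_lt (by norm_num) hτ]
end
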